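/- arXiv:2203.07765 — 7 statements merged into one kernel-verified Lean document; each statement's English description precedes it below -/
import Mathlib

section
/- Let E be a finite-dimensional real inner product space. Let T : E → E be quasi-nonexpansive with fix(T) ≠ ∅, and let T₂ : E → E be an operator such that Id − T₂ is demiclosed at 0 and fix(T₂) ⊆ fix(T). Assume there exists γ > 0 such that for every ω* ∈ fix(T) and every ω ∈ E, ‖T ω − ω*‖² ≤ ‖ω − ω*‖² − γ ‖ω − T₂ ω‖². Then T is quasi-shrinking on every compact convex set C ⊆ E with C ∩ fix(T) ≠ ∅. -/
open Metric Filter Topology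

variable {E : Type*} [NormedAddCommGroup E] [InnerProductSpace ℝ E] [FiniteDimensional ℝ E]

/-- The fixed-point set of an operator. -/
def fixSet (T : E → E) : Set E := {x | T x = x}

/-- The shrinkage function of `T` on `C`. -/
noncomputable def shrinkage (T : E → E) (C : Set E) (r : ℝ) : EReal :=
  ⨅ x ∈ {y ∈ C | r ≤ Metric.infDist y (fixSet T)},
    ((Metric.infDist x (fixSet T) - Metric.infDist (T x) (fixSet T) : ℝ) : EReal)

/-!
Minimizing the Fejér inequality over `ω* ∈ fix T` gives
`dist(T ω, fix T)² + γ ‖ω - T₂ ω‖² ≤ dist(ω, fix T)²`, so on a bounded set the residual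
`‖ω - T₂ ω‖` is small wherever the one-step decrease `dist(ω, fix T) - dist(T ω, fix T)` is.
If `D(r) = 0` for some `r > 0`, a sequence in `C` at distance at least `r` from `fix T` with
vanishing decrease has, by compactness, a subsequence converging to some `a` with
`dist(a, fix T) ≥ r`; by demiclosedness `a ∈ fix T₂ ⊆ fix T`, a contradiction.
-/

theorem infDist_sq_add_le_of_forall_dist_sq_add_le {α : Type*} [PseudoMetricSpace α]
    {s : Set α} (hs : s.Nonempty) {p q : α} {c : ℝ}
    (h : ∀ w ∈ s, dist p w ^ 2 + c ≤ dist q w ^ 2) :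
    infDist p s ^ 2 + c ≤ infDist q s ^ 2 := by
  have hsqrt : √(infDist p s ^ 2 + c) ≤ infDist q s :=
    (le_infDist hs).2 fun w hw => Real.sqrt_le_iff.2 ⟨dist_nonneg,
      (add_le_add_left (pow_le_pow_left₀ infDist_nonneg (infDist_le_dist_of_mem hw) 2) c).trans
        (h w hw)⟩
  exact (Real.sqrt_le_left infDist_nonneg).1 hsqrt

section Fejer

variable {V : Type*} [NormedAddCommGroup V] {T T₂ : V → V} {γ : ℝ}

theorem tendsto_zero_of_tendsto_mul_norm_sq {ι : Type*} {l : Filter ι} {u : ι → V}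
    (hγ : 0 < γ) (h : Tendsto (fun k => γ * ‖u k‖ ^ 2) l (𝓝 0)) : Tendsto u l (𝓝 0) := by
  refine tendsto_zero_iff_norm_tendsto_zero.2 ?_
  simpa only [inv_mul_cancel_left₀ hγ.ne', Real.sqrt_sq (norm_nonneg _), mul_zero,
    Real.sqrt_zero] using (h.const_mul γ⁻¹).sqrt

theorem infDist_fixSet_sq_add_le (hF : (fixSet T).Nonempty)
    (hineq : ∀ ωs ∈ fixSet T, ∀ ω : V,
      ‖T ω - ωs‖ ^ 2 ≤ ‖ω - ωs‖ ^ 2 - γ * ‖ω - T₂ ω‖ ^ 2) (x : V) :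
    infDist (T x) (fixSet T) ^ 2 + γ * ‖x - T₂ x‖ ^ 2 ≤ infDist x (fixSet T) ^ 2 :=
  infDist_sq_add_le_of_forall_dist_sq_add_le hF fun w hw => by
    simpa only [dist_eq_norm, le_sub_iff_add_le] using hineq w hw x

theorem infDist_fixSet_apply_le (hF : (fixSet T).Nonempty) (hγ : 0 ≤ γ)
    (hineq : ∀ ωs ∈ fixSet T, ∀ ω : V,
      ‖T ω - ωs‖ ^ 2 ≤ ‖ω - ωs‖ ^ 2 - γ * ‖ω - T₂ ω‖ ^ 2) (x : V) :
    infDist (T x) (fixSet T) ≤ infDist x (fixSet T) := by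
  refine (pow_le_pow_iff_left₀ infDist_nonneg infDist_nonneg two_ne_zero).1 ?_
  have := infDist_fixSet_sq_add_le hF hineq x
  nlinarith [mul_nonneg hγ (sq_nonneg ‖x - T₂ x‖)]

theorem mul_sq_norm_sub_le_infDist_mul (hF : (fixSet T).Nonempty) (hγ : 0 ≤ γ)
    (hineq : ∀ ωs ∈ fixSet T, ∀ ω : V,
      ‖T ω - ωs‖ ^ 2 ≤ ‖ω - ωs‖ ^ 2 - γ * ‖ω - T₂ ω‖ ^ 2) (x : V) :
    γ * ‖x - T₂ x‖ ^ 2 ≤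
      2 * infDist x (fixSet T) * (infDist x (fixSet T) - infDist (T x) (fixSet T)) := by
  have hsq := infDist_fixSet_sq_add_le hF hineq x
  have hle := infDist_fixSet_apply_le hF hγ hineq x
  nlinarith [infDist_nonneg (x := T x) (s := fixSet T)]

end Fejer

section Shrinkage

variable {V : Type*} [NormedAddCommGroup V] {T : V → V} {C : Set V} {r : ℝ}

theorem shrinkage_lt_coe_iff {ε : ℝ} :
    shrinkage T C r < ε ↔ ∃ x ∈ C, r ≤ infDist x (fixSet T) ∧
      infDist x (fixSet T) - infDist (T x) (fixSet T) < ε := by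
  simp only [shrinkage, iInf_lt_iff, EReal.coe_lt_coe_iff, Set.mem_ofPred_eq, exists_prop,
    and_assoc]

theorem shrinkage_nonneg (h : ∀ x ∈ C, infDist (T x) (fixSet T) ≤ infDist x (fixSet T)) :
    0 ≤ shrinkage T C r :=
  le_iInf₂ fun x hx => EReal.coe_nonneg.2 (sub_nonneg.2 (h x hx.1))

theorem shrinkage_zero_nonpos (hCF : (C ∩ fixSet T).Nonempty) : shrinkage T C 0 ≤ 0 := by
  obtain ⟨z, hzC, hzF⟩ := hCF
  have hz : infDist z (fixSet T) = 0 := infDist_zero_of_mem hzF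
  refine (iInf₂_le z ⟨hzC, hz.ge⟩).trans ?_
  rw [show T z = z from hzF, hz, sub_zero, EReal.coe_zero]

theorem exists_seq_of_shrinkage_eq_zero (h : shrinkage T C r = 0) :
    ∃ x : ℕ → V, ∀ k, x k ∈ C ∧ r ≤ infDist (x k) (fixSet T) ∧
      infDist (x k) (fixSet T) - infDist (T (x k)) (fixSet T) < 1 / (k + 1) := by
  have hpos (k : ℕ) : (0 : EReal) < ((1 / (k + 1) : ℝ) : EReal) :=
    EReal.coe_pos.2 Nat.one_div_pos_of_nat
  choose x hxC hx using fun k : ℕ => shrinkage_lt_coe_iff.1 (h.trans_lt (hpos k))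
  exact ⟨x, fun k => ⟨hxC k, hx k⟩⟩

theorem nonpos_of_shrinkage_eq_zero {T₂ : V → V} {γ : ℝ} (hC : IsCompact C)
    (hCF : (C ∩ fixSet T).Nonempty) (hγ : 0 < γ)
    (hineq : ∀ ωs ∈ fixSet T, ∀ ω : V,
      ‖T ω - ωs‖ ^ 2 ≤ ‖ω - ωs‖ ^ 2 - γ * ‖ω - T₂ ω‖ ^ 2)
    (hdemi : ∀ (x : ℕ → V) (xlim : V), Tendsto x atTop (𝓝 xlim) →
      Tendsto (fun k => x k - T₂ (x k)) atTop (𝓝 (0 : V)) → xlim - T₂ xlim = 0)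
    (hsub : fixSet T₂ ⊆ fixSet T) (h : shrinkage T C r = 0) : r ≤ 0 := by
  obtain ⟨z, hzC, hzF⟩ := hCF
  have hF : (fixSet T).Nonempty := ⟨z, hzF⟩
  obtain ⟨x, hx⟩ := exists_seq_of_shrinkage_eq_zero h
  choose hxC hxr hxdecr using hx
  have hbound (k : ℕ) : γ * ‖x k - T₂ (x k)‖ ^ 2 ≤ 2 * diam C * (1 / (k + 1)) := by
    have hdiam : infDist (x k) (fixSet T) ≤ diam C := (infDist_le_dist_of_mem hzF).trans
      (dist_le_diam_of_mem hC.isBounded (hxC k) hzC)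
    refine (mul_sq_norm_sub_le_infDist_mul hF hγ.le hineq (x k)).trans
      (mul_le_mul (by linarith) (hxdecr k).le ?_ (by positivity))
    exact sub_nonneg.2 (infDist_fixSet_apply_le hF hγ.le hineq (x k))
  have hres : Tendsto (fun k => x k - T₂ (x k)) atTop (𝓝 0) :=
    tendsto_zero_of_tendsto_mul_norm_sq hγ <| squeeze_zero (fun k => by positivity) hbound
      (by simpa using tendsto_one_div_add_atTop_nhds_zero_nat.const_mul (2 * diam C))
  obtain ⟨a, -, φ, hφ, hlim⟩ := hC.tendsto_subseq hxC
  have haF : a ∈ fixSet T :=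
    hsub (sub_eq_zero.1 (hdemi _ a hlim (hres.comp hφ.tendsto_atTop))).symm
  have hra : r ≤ infDist a (fixSet T) :=
    ge_of_tendsto (((continuous_infDist_pt _).tendsto a).comp hlim)
      (Eventually.of_forall fun k => hxr (φ k))
  rwa [infDist_zero_of_mem haF] at hra

end Shrinkage

theorem quasi_shrinking_of_demiclosed_general
    (T T₂ : E → E)
    (hdemi : ∀ (x : ℕ → E) (xlim : E), Tendsto x atTop (𝓝 xlim) →
      Tendsto (fun k => x k - T₂ (x k)) atTop (𝓝 (0 : E)) → xlim - T₂ xlim = 0)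
    (hsub : fixSet T₂ ⊆ fixSet T)
    (γ : ℝ) (hγ : 0 < γ)
    (hineq : ∀ ωs ∈ fixSet T, ∀ ω : E,
      ‖T ω - ωs‖ ^ 2 ≤ ‖ω - ωs‖ ^ 2 - γ * ‖ω - T₂ ω‖ ^ 2) :
    ∀ C : Set E, IsCompact C → Convex ℝ C → (C ∩ fixSet T).Nonempty →
      ∀ r : ℝ, 0 ≤ r → (shrinkage T C r = 0 ↔ r = 0) := by
  intro C hC _ hCF r hr
  have hF : (fixSet T).Nonempty := hCF.mono Set.inter_subset_right
  refine ⟨fun h => le_antisymm (nonpos_of_shrinkage_eq_zero hC hCF hγ hineq hdemi hsub h) hr, ?_⟩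
  rintro rfl
  exact le_antisymm (shrinkage_zero_nonpos hCF)
    (shrinkage_nonneg fun x _ => infDist_fixSet_apply_le hF hγ.le hineq x)

/-- Lemma 1: let `T` be quasi-nonexpansive with nonempty fixed-point set, let `T₂` be such
that `Id - T₂` is demiclosed at `0` and `fix T₂ ⊆ fix T`, and suppose the Fejér-type
inequality `‖T ω - ω*‖² ≤ ‖ω - ω*‖² - γ ‖ω - T₂ ω‖²` holds for some `γ > 0`.
Then `T` is quasi-shrinking on every compact convex set `C` meeting `fix T`. -/
theorem quasi_shrinking_of_demiclosed
    (T T₂ : E → E)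
    (hfixne : (fixSet T).Nonempty)
    (hqne : ∀ z ∈ fixSet T, ∀ x : E, ‖T x - z‖ ≤ ‖x - z‖)
    (hdemi : ∀ (x : ℕ → E) (xlim : E), Tendsto x atTop (𝓝 xlim) →
      Tendsto (fun k => x k - T₂ (x k)) atTop (𝓝 (0 : E)) → xlim - T₂ xlim = 0)
    (hsub : fixSet T₂ ⊆ fixSet T)
    (γ : ℝ) (hγ : 0 < γ)
    (hineq : ∀ ωs ∈ fixSet T, ∀ ω : E,
      ‖T ω - ωs‖ ^ 2 ≤ ‖ω - ωs‖ ^ 2 - γ * ‖ω - T₂ ω‖ ^ 2) :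
    ∀ C : Set E, IsCompact C → Convex ℝ C → (C ∩ fixSet T).Nonempty →
      ∀ r : ℝ, 0 ≤ r → (shrinkage T C r = 0 ↔ r = 0) :=
  quasi_shrinking_of_demiclosed_general T T₂ hdemi hsub γ hγ hineq
end

section
/- Let E be a finite-dimensional real inner product space, let φ : E → ℝ be convex and continuously differentiable with L-Lipschitz continuous gradient, and let T : E → E be quasi-nonexpansive with fix(T) nonempty and bounded. Let C ⊆ E be a nonempty bounded closed convex set on which T is quasi-shrinking, and let Ω* := {ω* ∈ fix(T) : ⟨ω − ω*, ∇φ(ω*)⟩ ≥ 0 for all ω ∈ fix(T)} be nonempty. Let (β_k)_{k∈ℕ} be positive step sizes with β_k → 0 and ∑_k β_k = ∞, and let (ω^k) be generated by the hybrid steepest descent iteration ω^{k+1} = T(ω^k) − β_k ∇φ(T(ω^k)). If ω^k ∈ C for all k, then dist(ω^k, Ω*) → 0 as k → ∞. -/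
open Metric Filter Topology
open scoped RealInnerProductSpace

variable {E : Type*} [NormedAddCommGroup E] [InnerProductSpace ℝ E] [FiniteDimensional ℝ E]

/-!
Quasi-nonexpansiveness makes `fix T` closed and convex and makes `dist (·, fix T)`
non-increasing under `T`; quasi-shrinking says it drops by a definite amount on `C` away from
`fix T`. Since the perturbations `β_k ∇φ(T ω^k)` vanish, `dist (ω^k, fix T) → 0`.

By convexity, `Ω*` is the set of minimisers of `φ` on `fix T`, and the first-order inequality gives,
for `z ∈ Ω*` and a bound `M` of `‖∇φ‖` on the bounded set `T '' C`,
`‖ω^{k+1} - z‖² ≤ ‖ω^k - z‖² - 2 β_k (φ (T ω^k) - min φ) + β_k² M²`. While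
`φ (T ω^k)` exceeds the minimum by some fixed `γ`, `dist (ω^k, Ω*)²` thus decreases by `γ β_k`,
which cannot go on forever as `∑ β_k = ∞`; otherwise `T ω^k` is close to `fix T` with almost
minimal value, hence, by compactness, close to `Ω*`.
-/

open Set Finset

theorem dist_sub_smul_le {V : Type*} [SeminormedAddCommGroup V] [NormedSpace ℝ V] {y g : V}
    {β M : ℝ} (hβ : 0 ≤ β) (hg : ‖g‖ ≤ M) : dist (y - β • g) y ≤ β * M := by
  rw [dist_self_sub_left, norm_smul, Real.norm_of_nonneg hβ]
  exact mul_le_mul_of_nonneg_left hg hβ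

theorem eventually_le_of_le_or_le_sub {a c : ℕ → ℝ} {ε : ℝ} (ha : ∀ k, 0 ≤ a k)
    (hc : ∀ k, 0 ≤ c k) (hsum : Tendsto (fun n => ∑ k ∈ range n, c k) atTop atTop)
    (hstep : ∀ᶠ k in atTop, a (k + 1) ≤ ε ∨ a (k + 1) ≤ a k - c k) :
    ∀ᶠ k in atTop, a k ≤ ε := by
  obtain ⟨K, hK⟩ := eventually_atTop.1 hstep
  obtain ⟨k₁, hk₁K, hk₁⟩ : ∃ k ≥ K, a (k + 1) ≤ ε := by
    by_contra! hbig
    have hdesc : ∀ n ≥ K, a n ≤ a K - ∑ k ∈ Ico K n, c k := by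
      intro n hn
      induction n, hn using Nat.le_induction with
      | base => simp
      | succ n hn ih =>
        rw [sum_Ico_succ_top hn]
        linarith [(hK n hn).resolve_left (hbig n hn).not_ge]
    obtain ⟨n, hnK, hn⟩ := ((eventually_ge_atTop K).and
      (hsum.eventually_gt_atTop (a K + ∑ k ∈ range K, c k))).exists
    linarith [hdesc n hnK, sum_Ico_eq_sub c hnK, ha n]
  refine eventually_atTop.2 ⟨k₁ + 1, fun n hn => ?_⟩
  induction n, hn using Nat.le_induction with
  | base => exact hk₁
  | succ n hn ih =>
    rcases hK n (by omega) with h | h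
    · exact h
    · linarith [hc n]

theorem tendsto_zero_of_le_or_le_sub {a : ℕ → ℝ} (ha : ∀ k, 0 ≤ a k)
    (h : ∀ ε > 0, ∃ c : ℕ → ℝ, (∀ k, 0 ≤ c k) ∧
      Tendsto (fun n => ∑ k ∈ range n, c k) atTop atTop ∧
      ∀ᶠ k in atTop, a (k + 1) ≤ ε ∨ a (k + 1) ≤ a k - c k) :
    Tendsto a atTop (𝓝 0) := by
  refine tendsto_order.2 ⟨fun b hb => Eventually.of_forall fun k => hb.trans_le (ha k),
    fun b hb => ?_⟩
  obtain ⟨c, hc, hsum, hstep⟩ := h (b / 2) (half_pos hb)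
  exact (eventually_le_of_le_or_le_sub ha hc hsum hstep).mono fun k hk =>
    hk.trans_lt (half_lt_self hb)

theorem exists_pos_infDist_sep_lt {X : Type*} [PseudoMetricSpace X] {K F : Set X} {g : X → ℝ}
    {m η : ℝ} (hK : IsCompact K) (hF : IsClosed F) (hFne : F.Nonempty) (hg : Continuous g)
    (hη : 0 < η) :
    ∃ γ > 0, ∀ u ∈ K, infDist u F ≤ γ → g u ≤ m + γ → infDist u {x ∈ F | g x ≤ m} < η := by
  set S := {x ∈ F | g x ≤ m}
  have hfar : IsCompact {u ∈ K | η ≤ infDist u S} :=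
    hK.inter_right (isClosed_le continuous_const (continuous_infDist_pt S))
  have hpos : ∀ u ∈ {u ∈ K | η ≤ infDist u S}, 0 < max (infDist u F) (g u - m) := by
    rintro u ⟨-, hu⟩
    by_contra! hle
    have huS : u ∈ S := ⟨(hF.mem_iff_infDist_zero hFne).2
      (le_antisymm (le_of_max_le_left hle) infDist_nonneg), by linarith [le_of_max_le_right hle]⟩
    linarith [infDist_zero_of_mem huS]
  obtain ⟨γ, hγ, hγle⟩ := hfar.exists_forall_le' (f := fun u => max (infDist u F) (g u - m))
    ((continuous_infDist_pt F).max (hg.sub continuous_const)).continuousOn hpos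
  refine ⟨γ / 2, half_pos hγ, fun u hu huF hgu => ?_⟩
  by_contra! hu_far
  have hγ_le := hγle u ⟨hu, hu_far⟩
  have hle_γ : max (infDist u F) (g u - m) ≤ γ / 2 := max_le huF (by linarith)
  linarith

section QuasiNonexpansive

variable {X : Type*} [NormedAddCommGroup X] {T : X → X}

theorem infDist_apply_fixSet_le (hT : ∀ z ∈ fixSet T, ∀ x, ‖T x - z‖ ≤ ‖x - z‖) (x : X) :
    infDist (T x) (fixSet T) ≤ infDist x (fixSet T) := by
  rcases (fixSet T).eq_empty_or_nonempty with hF | hF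
  · simp [hF]
  · refine (le_infDist hF).2 fun z hz => ?_
    calc infDist (T x) (fixSet T) ≤ dist (T x) z := infDist_le_dist_of_mem hz
      _ ≤ dist x z := by simpa only [dist_eq_norm] using hT z hz x

theorem fixSet_eq_iInter (hT : ∀ z ∈ fixSet T, ∀ x, ‖T x - z‖ ≤ ‖x - z‖) :
    fixSet T = ⋂ x, {z | ‖T x - z‖ ≤ ‖x - z‖} := by
  ext z
  refine ⟨fun hz => mem_iInter.2 fun x => hT z hz x, fun hz => ?_⟩
  simpa [fixSet, sub_eq_zero] using mem_iInter.1 hz z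

theorem isClosed_fixSet (hT : ∀ z ∈ fixSet T, ∀ x, ‖T x - z‖ ≤ ‖x - z‖) :
    IsClosed (fixSet T) := by
  rw [fixSet_eq_iInter hT]
  exact isClosed_iInter fun x => isClosed_le (by fun_prop) (by fun_prop)

theorem exists_pos_le_infDist_sub_of_shrinkage_ne_zero {C : Set X} {r : ℝ}
    (hT : ∀ z ∈ fixSet T, ∀ x, ‖T x - z‖ ≤ ‖x - z‖) (hr : shrinkage T C r ≠ 0) :
    ∃ δ > 0, ∀ x ∈ C, r ≤ infDist x (fixSet T) →
      δ ≤ infDist x (fixSet T) - infDist (T x) (fixSet T) := by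
  have hnonneg : (0 : EReal) ≤ shrinkage T C r :=
    le_iInf₂ fun x _ => EReal.coe_nonneg.2 (sub_nonneg.2 (infDist_apply_fixSet_le hT x))
  obtain ⟨δ, hδ, hδlt⟩ := EReal.exists_between_coe_real (hnonneg.lt_of_ne' hr)
  refine ⟨δ, EReal.coe_pos.1 hδ, fun x hx hrx => ?_⟩
  exact EReal.coe_le_coe_iff.1 (hδlt.trans_le (iInf₂_le x ⟨hx, hrx⟩)).le

theorem tendsto_infDist_fixSet_of_shrinkage_ne_zero {C : Set X} {x : ℕ → X}
    (hT : ∀ z ∈ fixSet T, ∀ x, ‖T x - z‖ ≤ ‖x - z‖)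
    (hshrink : ∀ r, 0 < r → shrinkage T C r ≠ 0) (hxC : ∀ k, x k ∈ C)
    (hx : Tendsto (fun k => dist (x (k + 1)) (T (x k))) atTop (𝓝 0)) :
    Tendsto (fun k => infDist (x k) (fixSet T)) atTop (𝓝 0) := by
  refine tendsto_zero_of_le_or_le_sub (fun k => infDist_nonneg) fun ε hε => ?_
  obtain ⟨δ, hδ, hshrink_δ⟩ :=
    exists_pos_le_infDist_sub_of_shrinkage_ne_zero hT (hshrink (ε / 2) (half_pos hε))
  refine ⟨fun _ => δ / 2, fun _ => (half_pos hδ).le,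
    by simpa using tendsto_natCast_atTop_atTop.atTop_mul_const (half_pos hδ), ?_⟩
  have he : 0 < min δ ε / 2 := half_pos (lt_min hδ hε)
  filter_upwards [hx.eventually_lt_const he] with k hk
  have hnext : infDist (x (k + 1)) (fixSet T) < infDist (T (x k)) (fixSet T) + min δ ε / 2 :=
    infDist_le_infDist_add_dist.trans_lt ((add_lt_add_iff_left _).2 hk)
  have hδe := min_le_left δ ε
  have hεe := min_le_right δ ε
  by_cases hsmall : infDist (x k) (fixSet T) < ε / 2
  · left
    linarith [infDist_apply_fixSet_le hT (x k)]
  · right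
    linarith [hshrink_δ (x k) (hxC k) (not_lt.1 hsmall)]

end QuasiNonexpansive

section InnerProductSpace

variable {H : Type*} [NormedAddCommGroup H] [InnerProductSpace ℝ H]

theorem convex_setOf_norm_sub_le_norm_sub (a b : H) : Convex ℝ {z : H | ‖a - z‖ ≤ ‖b - z‖} := by
  have hset : {z : H | ‖a - z‖ ≤ ‖b - z‖} = {z | ⟪b - a, z⟫ ≤ (‖b‖ ^ 2 - ‖a‖ ^ 2) / 2} := by
    ext z
    rw [mem_ofPred_eq, mem_ofPred_eq, ← sq_le_sq₀ (norm_nonneg _) (norm_nonneg _),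
      norm_sub_sq_real, norm_sub_sq_real, inner_sub_left]
    constructor <;> intro h <;> linarith
  rw [hset]
  exact convex_halfSpace_le (innerₛₗ ℝ (b - a)).isLinear _

theorem convex_fixSet {T : H → H} (hT : ∀ z ∈ fixSet T, ∀ x, ‖T x - z‖ ≤ ‖x - z‖) :
    Convex ℝ (fixSet T) := by
  rw [fixSet_eq_iInter hT]
  exact convex_iInter fun x => convex_setOf_norm_sub_le_norm_sub (T x) x

variable [CompleteSpace H] {φ : H → ℝ} {f' : H → H} {F : Set H} {g x y : H}

theorem ConvexOn.add_inner_gradient_le (hφ : ConvexOn ℝ univ φ) (hg : HasGradientAt φ g x)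
    (y : H) : φ x + ⟪g, y - x⟫ ≤ φ y := by
  have hline : HasDerivAt (φ ∘ AffineMap.lineMap (k := ℝ) x y) ⟪g, y - x⟫ 0 := by
    have hg' : HasFDerivAt φ (InnerProductSpace.toDual ℝ H g) (AffineMap.lineMap x y (0 : ℝ)) := by
      simpa using hg.hasFDerivAt
    simpa [InnerProductSpace.toDual_apply_apply] using
      hg'.comp_hasDerivAt (0 : ℝ) (AffineMap.hasDerivAt_lineMap (a := x) (b := y))
  have hslope := (hφ.comp_affineMap (AffineMap.lineMap x y)).le_slope_of_hasDerivAt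
    (mem_univ 0) (mem_univ 1) one_pos hline
  simp [slope_def_field] at hslope
  linarith

theorem IsMinOn.inner_gradient_nonneg (hF : Convex ℝ F) (hx : x ∈ F)
    (hmin : IsMinOn φ F x) (hg : HasGradientAt φ g x) (hy : y ∈ F) : 0 ≤ ⟪g, y - x⟫ := by
  simpa [InnerProductSpace.toDual_apply_apply] using
    hmin.localize.hasFDerivWithinAt_nonneg hg.hasFDerivAt.hasFDerivWithinAt
      (sub_mem_posTangentConeAt_of_segment_subset (hF.segment_subset hx hy))

theorem isMinOn_iff_forall_inner_gradient_nonneg (hφ : ConvexOn ℝ univ φ)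
    (hF : Convex ℝ F) (hx : x ∈ F) (hg : HasGradientAt φ g x) :
    IsMinOn φ F x ↔ ∀ y ∈ F, 0 ≤ ⟪y - x, g⟫ := by
  refine ⟨fun hmin y hy => ?_, fun h => isMinOn_iff.2 fun y hy => ?_⟩
  · rw [real_inner_comm]
    exact hmin.inner_gradient_nonneg hF hx hg hy
  · have := hφ.add_inner_gradient_le hg y
    rw [real_inner_comm] at this
    linarith [h y hy]

theorem sep_forall_inner_gradient_nonneg_eq (hφ : ConvexOn ℝ univ φ)
    (hgrad : ∀ x, HasGradientAt φ (f' x) x) (hF : Convex ℝ F) {z₀ : H}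
    (hz₀ : z₀ ∈ {z ∈ F | ∀ y ∈ F, 0 ≤ ⟪y - z, f' z⟫}) :
    {z ∈ F | ∀ y ∈ F, 0 ≤ ⟪y - z, f' z⟫} = {z ∈ F | φ z ≤ φ z₀} := by
  have hmin₀ := (isMinOn_iff_forall_inner_gradient_nonneg hφ hF hz₀.1 (hgrad z₀)).2 hz₀.2
  ext z
  refine ⟨fun ⟨hz, hvi⟩ => ⟨hz, ?_⟩, fun ⟨hz, hle⟩ => ⟨hz, ?_⟩⟩
  · exact (isMinOn_iff_forall_inner_gradient_nonneg hφ hF hz (hgrad z)).2 hvi hz₀.1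
  · exact (isMinOn_iff_forall_inner_gradient_nonneg hφ hF hz (hgrad z)).1
      (fun y hy => hle.trans (hmin₀ hy))

theorem ConvexOn.norm_sub_smul_gradient_sub_sq_le (hφ : ConvexOn ℝ univ φ)
    (hg : HasGradientAt φ g y) {β : ℝ} (hβ : 0 ≤ β) (z : H) :
    ‖y - β • g - z‖ ^ 2 ≤ ‖y - z‖ ^ 2 - 2 * β * (φ y - φ z) + β ^ 2 * ‖g‖ ^ 2 := by
  have hfirst : φ y - φ z ≤ ⟪y - z, g⟫ := by
    have := hφ.add_inner_gradient_le hg z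
    rw [← neg_sub y z, inner_neg_right, real_inner_comm] at this
    linarith
  rw [sub_right_comm, norm_sub_sq_real, real_inner_smul_right, norm_smul, mul_pow,
    Real.norm_eq_abs, sq_abs]
  nlinarith [mul_le_mul_of_nonneg_left hfirst hβ]

theorem infDist_sub_smul_gradient_sq_le {S : Set H} (hS : IsCompact S) (hSne : S.Nonempty)
    (hφ : ConvexOn ℝ univ φ) (hg : HasGradientAt φ g y) {β m : ℝ} (hβ : 0 ≤ β)
    (hyx : ∀ z ∈ S, ‖y - z‖ ≤ ‖x - z‖) (hm : ∀ z ∈ S, φ z ≤ m) :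
    infDist (y - β • g) S ^ 2 ≤ infDist x S ^ 2 - 2 * β * (φ y - m) + β ^ 2 * ‖g‖ ^ 2 := by
  obtain ⟨z, hz, hxz⟩ := hS.exists_infDist_eq_dist hSne x
  have hnext : infDist (y - β • g) S ≤ ‖y - β • g - z‖ := by
    rw [← dist_eq_norm]; exact infDist_le_dist_of_mem hz
  have hyz : ‖y - z‖ ≤ infDist x S := by rw [hxz, dist_eq_norm]; exact hyx z hz
  have := hφ.norm_sub_smul_gradient_sub_sq_le hg hβ z
  nlinarith [infDist_nonneg (x := y - β • g) (s := S), norm_nonneg (y - z),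
    mul_le_mul_of_nonneg_left (hm z hz) hβ]

theorem tendsto_infDist_sublevel_of_gradient_steps {K : Set H} {m M : ℝ} {β : ℕ → ℝ}
    {x y : ℕ → H} (hφ : ConvexOn ℝ univ φ) (hgrad : ∀ u, HasGradientAt φ (f' u) u)
    (hF : IsCompact F) (hSne : {z ∈ F | φ z ≤ m}.Nonempty)
    (hK : IsCompact K) (hyK : ∀ k, y k ∈ K) (hM : ∀ k, ‖f' (y k)‖ ≤ M)
    (hyx : ∀ k, ∀ z ∈ F, ‖y k - z‖ ≤ ‖x k - z‖)
    (hβ : ∀ k, 0 ≤ β k) (hβ0 : Tendsto β atTop (𝓝 0))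
    (hβsum : Tendsto (fun n => ∑ k ∈ range n, β k) atTop atTop)
    (hrec : ∀ k, x (k + 1) = y k - β k • f' (y k))
    (hyF : Tendsto (fun k => infDist (y k) F) atTop (𝓝 0)) :
    Tendsto (fun k => infDist (x k) {z ∈ F | φ z ≤ m}) atTop (𝓝 0) := by
  set S := {z ∈ F | φ z ≤ m}
  have hφc : Continuous φ := continuous_iff_continuousAt.2 fun u =>
    (hgrad u).differentiableAt.continuousAt
  have hS : IsCompact S := hF.inter_right (isClosed_le hφc continuous_const)
  suffices hsq : Tendsto (fun k => infDist (x k) S ^ 2) atTop (𝓝 0) by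
    simpa [Function.comp_def, Real.sqrt_sq infDist_nonneg] using
      (Real.continuous_sqrt.tendsto 0).comp hsq
  refine tendsto_zero_of_le_or_le_sub (fun k => sq_nonneg _) fun ε hε => ?_
  obtain ⟨γ, hγ, hnear⟩ := exists_pos_infDist_sep_lt (m := m) hK hF.isClosed
    (hSne.mono (sep_subset _ _)) hφc (half_pos (Real.sqrt_pos.2 hε))
  refine ⟨fun k => γ * β k, fun k => mul_nonneg hγ.le (hβ k),
    by simpa [← Finset.mul_sum] using hβsum.const_mul_atTop hγ, ?_⟩
  have hβM : Tendsto (fun k => β k * M) atTop (𝓝 0) := by simpa using hβ0.mul_const M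
  have hβM2 : Tendsto (fun k => β k * M ^ 2) atTop (𝓝 0) := by simpa using hβ0.mul_const (M ^ 2)
  filter_upwards [hβM.eventually_lt_const (half_pos (Real.sqrt_pos.2 hε)),
    hβM2.eventually_lt_const hγ, hyF.eventually_lt_const hγ] with k hkM hkM2 hkF
  have hgM : ‖f' (y k)‖ ^ 2 ≤ M ^ 2 := pow_le_pow_left₀ (norm_nonneg _) (hM k) 2
  by_cases hgood : φ (y k) ≤ m + γ
  · left
    have hstep : dist (x (k + 1)) (y k) ≤ β k * M := hrec k ▸ dist_sub_smul_le (hβ k) (hM k)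
    have : infDist (x (k + 1)) S < √ε := calc
      infDist (x (k + 1)) S ≤ infDist (y k) S + dist (x (k + 1)) (y k) :=
        infDist_le_infDist_add_dist
      _ < √ε / 2 + √ε / 2 := add_lt_add (hnear _ (hyK k) hkF.le hgood) (hstep.trans_lt hkM)
      _ = √ε := add_halves _
    exact ((Real.lt_sqrt infDist_nonneg).1 this).le
  · right
    have hdesc := infDist_sub_smul_gradient_sq_le hS hSne hφ (hgrad (y k)) (hβ k)
      (fun z hz => hyx k z hz.1) (fun z hz => hz.2)
    rw [← hrec] at hdesc
    nlinarith [mul_le_mul_of_nonneg_left hgM (sq_nonneg (β k)), hβ k]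

end InnerProductSpace

theorem hsdm_dist_tendsto_zero_general
    (φ : E → ℝ) (f' : E → E) (L : ℝ) (hL : 0 ≤ L)
    (hconv : ConvexOn ℝ Set.univ φ)
    (hgrad : ∀ x : E, HasGradientAt φ (f' x) x)
    (hlip : ∀ x y : E, ‖f' x - f' y‖ ≤ L * ‖x - y‖)
    (T : E → E)
    (hfixne : (fixSet T).Nonempty)
    (hfixbdd : Bornology.IsBounded (fixSet T))
    (hqne : ∀ z ∈ fixSet T, ∀ x : E, ‖T x - z‖ ≤ ‖x - z‖)
    (C : Set E) (hCbdd : Bornology.IsBounded C)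
    (hshrink : ∀ r : ℝ, 0 ≤ r → (shrinkage T C r = 0 ↔ r = 0))
    (Ωs : Set E)
    (hΩs : Ωs = {z ∈ fixSet T | ∀ ω ∈ fixSet T, 0 ≤ ⟪ω - z, f' z⟫})
    (hΩsne : Ωs.Nonempty)
    (β : ℕ → ℝ) (hβpos : ∀ k, 0 < β k)
    (hβ0 : Tendsto β atTop (𝓝 (0 : ℝ)))
    (hβsum : Tendsto (fun N => ∑ k ∈ Finset.range N, β k) atTop atTop)
    (ω : ℕ → E)
    (hrec : ∀ k : ℕ, ω (k + 1) = T (ω k) - β k • f' (T (ω k)))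
    (hmem : ∀ k : ℕ, ω k ∈ C) :
    Tendsto (fun k => Metric.infDist (ω k) Ωs) atTop (𝓝 (0 : ℝ)) := by
  obtain ⟨z₀, hz₀⟩ := hfixne
  obtain ⟨ρ, hCρ⟩ := hCbdd.subset_closedBall z₀
  have hTω : ∀ k, T (ω k) ∈ closedBall z₀ ρ := fun k => mem_closedBall_iff_norm.2
    ((hqne z₀ hz₀ (ω k)).trans (mem_closedBall_iff_norm.1 (hCρ (hmem k))))
  obtain ⟨M, hM⟩ : ∃ M, ∀ k, ‖f' (T (ω k))‖ ≤ M := ⟨‖f' z₀‖ + L * ρ, fun k => calc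
    ‖f' (T (ω k))‖ ≤ ‖f' z₀‖ + ‖f' (T (ω k)) - f' z₀‖ := norm_le_insert' _ _
    _ ≤ ‖f' z₀‖ + L * ρ := by
      gcongr
      exact (hlip _ _).trans (mul_le_mul_of_nonneg_left (mem_closedBall_iff_norm.1 (hTω k)) hL)⟩
  have hdist : Tendsto (fun k => infDist (ω k) (fixSet T)) atTop (𝓝 0) :=
    tendsto_infDist_fixSet_of_shrinkage_ne_zero hqne
      (fun r hr h => hr.ne' ((hshrink r hr.le).1 h)) hmem
      (squeeze_zero (fun _ => dist_nonneg) (fun k => hrec k ▸ dist_sub_smul_le (hβpos k).le (hM k))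
        (by simpa using hβ0.mul_const M))
  obtain ⟨ωs, hωs⟩ := hΩsne
  rw [hΩs] at hωs ⊢
  rw [sep_forall_inner_gradient_nonneg_eq hconv hgrad (convex_fixSet hqne) hωs]
  exact tendsto_infDist_sublevel_of_gradient_steps hconv hgrad
    (isCompact_of_isClosed_isBounded (isClosed_fixSet hqne) hfixbdd) ⟨ωs, hωs.1, le_rfl⟩
    (isCompact_closedBall z₀ ρ) hTω hM (fun k z hz => hqne z hz (ω k)) (fun k => (hβpos k).le)
    hβ0 hβsum hrec (squeeze_zero (fun _ => infDist_nonneg)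
      (fun k => infDist_apply_fixSet_le hqne (ω k)) hdist)

/-- Lemma 2 (Yamada–Ogura): convergence of the hybrid steepest descent method.
If `T` is quasi-nonexpansive with nonempty bounded fixed-point set, quasi-shrinking on a
nonempty bounded closed convex set `C`, `φ` is convex with `L`-Lipschitz gradient `f'`,
the step sizes are positive, vanishing and non-summable, and the HSDM iterates all stay
in `C`, then the distance of the iterates to the solution set `Ω*` of the variational
inequality over `fix T` tends to `0`. -/
theorem hsdm_dist_tendsto_zero
    (φ : E → ℝ) (f' : E → E) (L : ℝ) (hL : 0 ≤ L)
    (hconv : ConvexOn ℝ Set.univ φ)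
    (hgrad : ∀ x : E, HasGradientAt φ (f' x) x)
    (hlip : ∀ x y : E, ‖f' x - f' y‖ ≤ L * ‖x - y‖)
    (T : E → E)
    (hfixne : (fixSet T).Nonempty)
    (hfixbdd : Bornology.IsBounded (fixSet T))
    (hqne : ∀ z ∈ fixSet T, ∀ x : E, ‖T x - z‖ ≤ ‖x - z‖)
    (C : Set E) (hCne : C.Nonempty) (hCbdd : Bornology.IsBounded C)
    (hCcl : IsClosed C) (hCcv : Convex ℝ C)
    (hmeet : (fixSet T ∩ C).Nonempty)
    (hshrink : ∀ r : ℝ, 0 ≤ r → (shrinkage T C r = 0 ↔ r = 0))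
    (Ωs : Set E)
    (hΩs : Ωs = {z ∈ fixSet T | ∀ ω ∈ fixSet T, 0 ≤ ⟪ω - z, f' z⟫})
    (hΩsne : Ωs.Nonempty)
    (β : ℕ → ℝ) (hβpos : ∀ k, 0 < β k)
    (hβ0 : Tendsto β atTop (𝓝 (0 : ℝ)))
    (hβsum : Tendsto (fun N => ∑ k ∈ Finset.range N, β k) atTop atTop)
    (ω : ℕ → E)
    (hrec : ∀ k : ℕ, ω (k + 1) = T (ω k) - β k • f' (T (ω k)))
    (hmem : ∀ k : ℕ, ω k ∈ C) :
    Tendsto (fun k => Metric.infDist (ω k) Ωs) atTop (𝓝 (0 : ℝ)) :=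
  hsdm_dist_tendsto_zero_general φ f' L hL hconv hgrad hlip T hfixne hfixbdd hqne C hCbdd hshrink Ωs
    hΩs hΩsne β hβpos hβ0 hβsum ω hrec hmem
end

section
/- Let ψ : [0,∞) → [0,∞) be non-decreasing and nonnegative, let (b_k)_{k≥1} be a non-increasing sequence of nonnegative reals, and let (a_k)_{k≥1} be a sequence in [0,∞) satisfying a_{k+1} ≤ a_k − ψ(a_k) + b_{k+1} for all k ≥ 1. Let K ∈ ℕ with K ≥ 2. If there exists ξ > 0 such that ψ(ξ) ≥ max{2 b_1, 2 a_1/(K−1)}, then a_k ≤ ξ + b_k for all k ≥ K. -/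
/-- Lemma 5 (sequence lemma): if `ψ` is nonnegative and non-decreasing on `[0, ∞)`,
`(b_k)` is non-increasing and nonnegative, `(a_k)` is nonnegative and satisfies
`a_{k+1} ≤ a_k - ψ(a_k) + b_{k+1}` for all `k ≥ 1`, and `ψ(ξ) ≥ max{2 b_1, 2 a_1/(K-1)}`
for some `ξ > 0` and `K ≥ 2`, then `a_k ≤ ξ + b_k` for all `k ≥ K`. -/
theorem sequence_bound_lemma
    (ψ : ℝ → ℝ)
    (hψ_nonneg : ∀ r : ℝ, 0 ≤ r → 0 ≤ ψ r)
    (hψ_mono : ∀ r s : ℝ, 0 ≤ r → r ≤ s → ψ r ≤ ψ s)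
    (a b : ℕ → ℝ)
    (ha_nonneg : ∀ k ≥ 1, 0 ≤ a k)
    (hb_nonneg : ∀ k ≥ 1, 0 ≤ b k)
    (hb_mono : ∀ k ≥ 1, b (k + 1) ≤ b k)
    (hrec : ∀ k ≥ 1, a (k + 1) ≤ a k - ψ (a k) + b (k + 1))
    (K : ℕ) (hK : 2 ≤ K)
    (ξ : ℝ) (hξ : 0 < ξ)
    (hψξ : max (2 * b 1) (2 * a 1 / ((K : ℝ) - 1)) ≤ ψ ξ) :
    ∀ k ≥ K, a k ≤ ξ + b k := by
  set c := ψ ξ with hc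
  have hc1 : 2 * b 1 ≤ c := le_trans (le_max_left _ _) hψξ
  have hc2 : 2 * a 1 / ((K : ℝ) - 1) ≤ c := le_trans (le_max_right _ _) hψξ
  have hKr : (1 : ℝ) ≤ (K : ℝ) - 1 := by
    have : (2 : ℝ) ≤ (K : ℝ) := by exact_mod_cast hK
    linarith
  -- b (m+1) ≤ b 1
  have hb1 : ∀ m : ℕ, b (m + 1) ≤ b 1 := by
    intro m
    induction m with
    | zero => simp
    | succ n ih =>
      have := hb_mono (n + 1) (by omega)
      linarith
  have hb1' : ∀ k : ℕ, 1 ≤ k → b k ≤ b 1 := by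
    intro k hk
    obtain ⟨m, rfl⟩ := Nat.exists_eq_add_of_le hk
    have := hb1 m
    simpa [Nat.add_comm] using this
  -- one-step invariant
  have step : ∀ k, 1 ≤ k → a k ≤ ξ + b k → a (k + 1) ≤ ξ + b (k + 1) := by
    intro k hk hP
    have hr := hrec k hk
    by_cases h : a k ≤ ξ
    · have h1 := hψ_nonneg (a k) (ha_nonneg k hk)
      linarith
    · push_neg at h
      have hψak : c ≤ ψ (a k) := hψ_mono ξ (a k) hξ.le h.le
      have hbk : b k ≤ b 1 := hb1' k hk
      have hbk1 : b (k + 1) ≤ b 1 := hb1 k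
      linarith
  -- there exists j ≤ K with a j ≤ ξ
  have descent : ∃ j, 1 ≤ j ∧ j ≤ K ∧ a j ≤ ξ := by
    by_contra hcon
    push_neg at hcon
    have key : ∀ m : ℕ, m ≤ K - 1 → a (1 + m) ≤ a 1 - (m : ℝ) * (c / 2) := by
      intro m hm
      induction m with
      | zero => simp
      | succ n ih =>
        have ihn := ih (by omega)
        have h1n : 1 ≤ 1 + n := by omega
        have hnK : 1 + n ≤ K := by omega
        have hgt : ξ < a (1 + n) := hcon _ h1n hnK
        have hψn : c ≤ ψ (a (1 + n)) := hψ_mono ξ _ hξ.le hgt.le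
        have hr := hrec (1 + n) h1n
        have hb' : b (1 + n + 1) ≤ b 1 := hb1' _ (by omega)
        have heq : 1 + (n + 1) = 1 + n + 1 := by omega
        rw [heq]
        push_cast
        linarith
    have hKK : 1 + (K - 1) = K := by omega
    have hfin := key (K - 1) le_rfl
    rw [hKK] at hfin
    have hcast : ((K - 1 : ℕ) : ℝ) = (K : ℝ) - 1 := by
      have : (1 : ℕ) ≤ K := by omega
      push_cast [this]
      ring
    rw [hcast] at hfin
    have hpos : (0 : ℝ) < (K : ℝ) - 1 := by linarith
    have h2a : 2 * a 1 ≤ c * ((K : ℝ) - 1) := by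
      rw [div_le_iff₀ hpos] at hc2
      linarith
    have hgtK : ξ < a K := hcon K (by omega) le_rfl
    nlinarith
  obtain ⟨j, hj1, hjK, hja⟩ := descent
  have hinv : ∀ m : ℕ, a (j + m) ≤ ξ + b (j + m) := by
    intro m
    induction m with
    | zero =>
      simpa using le_add_of_nonneg_right (hb_nonneg j hj1) |>.trans' (by linarith)
    | succ n ih =>
      have := step (j + n) (by omega) ih
      simpa [Nat.add_assoc] using this
  intro k hk
  obtain ⟨m, rfl⟩ := Nat.exists_eq_add_of_le (le_trans hjK hk)
  exact hinv m
end

section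
/- Let E be a finite-dimensional real inner product space, let T : E → E be quasi-nonexpansive, and let D be the shrinkage function of T over the whole space E. Let σ > 0, let F : E → E be σ-strongly monotone with ‖F(ω)‖ ≤ U for all ω in the image of T, and let ω* be a solution of the variational inequality over fix(T): ω* ∈ fix(T) and ⟨ω − ω*, F(ω*)⟩ ≥ 0 for all ω ∈ fix(T). Let β > 0 be a constant step size, let (ω^k)_{k≥1} be generated by ω^{k+1} = T(ω^k) − β F(T(ω^k)), and let K ∈ ℕ with K ≥ 2. If there exists ξ > 0 such that D(ξ) ≥ max{2βU, 2·dist(ω^1, fix(T))/(K−1)}, then dist(ω^k, fix(T)) ≤ ξ + βU for all k ≥ K. -/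
open Metric
open scoped RealInnerProductSpace

variable {E : Type*} [NormedAddCommGroup E] [InnerProductSpace ℝ E] [FiniteDimensional ℝ E]

/-- Lemma 6(i): for the constant-step HSDM iteration driven by a quasi-nonexpansive `T`
and a `σ`-strongly monotone `F` bounded by `U` on the image of `T`, if the shrinkage
function `D` of `T` over the whole space satisfies
`D(ξ) ≥ max{2βU, 2 dist(ω¹, fix T)/(K-1)}` for some `ξ > 0`, then
`dist(ωᵏ, fix T) ≤ ξ + βU` for all `k ≥ K`. -/
theorem hsdm_dist_bound
    (T : E → E)
    (hfixne : (fixSet T).Nonempty)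
    (hqne : ∀ z ∈ fixSet T, ∀ x : E, ‖T x - z‖ ≤ ‖x - z‖)
    (σ : ℝ) (hσ : 0 < σ)
    (F : E → E)
    (hmono : ∀ u v : E, σ * ‖u - v‖ ^ 2 ≤ ⟪F u - F v, u - v⟫)
    (U : ℝ) (hU : ∀ x ∈ Set.range T, ‖F x‖ ≤ U)
    (ωs : E) (hωs : ωs ∈ fixSet T)
    (hVI : ∀ ω ∈ fixSet T, 0 ≤ ⟪ω - ωs, F ωs⟫)
    (β : ℝ) (hβ : 0 < β)
    (ω : ℕ → E)
    (hrec : ∀ k ≥ 1, ω (k + 1) = T (ω k) - β • F (T (ω k)))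
    (K : ℕ) (hK : 2 ≤ K)
    (ξ : ℝ) (hξ : 0 < ξ)
    (hD : ((max (2 * β * U) (2 * Metric.infDist (ω 1) (fixSet T) / ((K : ℝ) - 1)) : ℝ) : EReal)
      ≤ shrinkage T Set.univ ξ) :
    ∀ k ≥ K, Metric.infDist (ω k) (fixSet T) ≤ ξ + β * U := by
  set S := fixSet T with hS
  set d : E → ℝ := fun x => Metric.infDist x S with hd
  set M : ℝ := max (2 * β * U) (2 * Metric.infDist (ω 1) S / ((K : ℝ) - 1)) with hM
  obtain ⟨z, hz⟩ := hfixne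
  have hU0 : 0 ≤ U := le_trans (norm_nonneg _) (hU (T z) ⟨z, rfl⟩)
  have hβU0 : 0 ≤ β * U := mul_nonneg hβ.le hU0
  have h2βU : 2 * (β * U) ≤ M := by
    rw [hM]; simpa [mul_assoc] using le_max_left (2 * β * U) _
  have hKR : (2 : ℝ) ≤ (K : ℝ) := by exact_mod_cast hK
  have hKpos : (0 : ℝ) < (K : ℝ) - 1 := by linarith
  have hd1 : 2 * d (ω 1) / ((K : ℝ) - 1) ≤ M := le_max_right _ _
  -- d is nonincreasing under T
  have hTd : ∀ x : E, d (T x) ≤ d x := by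
    intro x
    by_contra h
    push_neg at h
    obtain ⟨y, hy, hlt⟩ := (Metric.infDist_lt_iff ⟨z, hz⟩).1 h
    have h1 : d (T x) ≤ dist (T x) y := Metric.infDist_le_dist_of_mem hy
    have h2 : dist (T x) y ≤ dist x y := by
      rw [dist_eq_norm, dist_eq_norm]; exact hqne y hy x
    linarith
  -- one step adds at most β U
  have hstep : ∀ k, 1 ≤ k → d (ω (k + 1)) ≤ d (T (ω k)) + β * U := by
    intro k hk
    have h1 : d (ω (k + 1)) ≤ d (T (ω k)) + dist (ω (k + 1)) (T (ω k)) :=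
      Metric.infDist_le_infDist_add_dist
    have h2 : dist (ω (k + 1)) (T (ω k)) ≤ β * U := by
      rw [hrec k hk, dist_eq_norm]
      have he : T (ω k) - β • F (T (ω k)) - T (ω k) = -(β • F (T (ω k))) := by abel
      rw [he, norm_neg, norm_smul, Real.norm_eq_abs, abs_of_pos hβ]
      exact mul_le_mul_of_nonneg_left (hU _ ⟨ω k, rfl⟩) hβ.le
    linarith
  have hstep' : ∀ k, 1 ≤ k → d (ω (k + 1)) ≤ d (ω k) + β * U := fun k hk =>
    le_trans (hstep k hk) (by have := hTd (ω k); linarith)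
  -- shrinkage bound
  have hshrink : ∀ x : E, ξ ≤ d x → M ≤ d x - d (T x) := by
    intro x hx
    have hmem : x ∈ {y ∈ (Set.univ : Set E) | ξ ≤ Metric.infDist y (fixSet T)} :=
      ⟨Set.mem_univ x, hx⟩
    have h := le_trans hD (iInf₂_le (f := fun x _ =>
      ((Metric.infDist x (fixSet T) - Metric.infDist (T x) (fixSet T) : ℝ) : EReal)) x hmem)
    exact_mod_cast h
  have hdec : ∀ k, 1 ≤ k → ξ ≤ d (ω k) → d (ω (k + 1)) ≤ d (ω k) - M + β * U := by
    intro k hk hxk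
    have h1 := hstep k hk
    have h2 := hshrink (ω k) hxk
    linarith
  -- there exists k₀ ∈ [1, K] with d (ω k₀) ≤ ξ
  have hexists : ∃ j, 1 ≤ j ∧ j ≤ K ∧ d (ω j) ≤ ξ := by
    by_contra hcon
    push_neg at hcon
    have hcon' : ∀ j, 1 ≤ j → j ≤ K → ξ < d (ω j) := hcon
    have key : ∀ i : ℕ, 1 + i ≤ K → d (ω (1 + i)) + (i : ℝ) * (M - β * U) ≤ d (ω 1) := by
      intro i
      induction i with
      | zero => intro _; simp
      | succ n ih =>
        intro hle
        have hle' : 1 + n ≤ K := by omega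
        have hξn : ξ ≤ d (ω (1 + n)) := (hcon' (1 + n) (by omega) hle').le
        have h1 := hdec (1 + n) (by omega) hξn
        have h2 := ih hle'
        have : (1 + (n + 1)) = (1 + n) + 1 := by omega
        rw [this]
        push_cast
        linarith
    have hKey := key (K - 1) (by omega)
    have hKeq : 1 + (K - 1) = K := by omega
    rw [hKeq] at hKey
    have hcast : ((K - 1 : ℕ) : ℝ) = (K : ℝ) - 1 := by
      have : (1 : ℕ) ≤ K := by omega
      push_cast [this]; ring
    rw [hcast] at hKey
    have hMd : d (ω 1) ≤ ((K : ℝ) - 1) * M / 2 := by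
      rw [div_le_iff₀ hKpos] at hd1
      · linarith
    have hMU : β * U ≤ M / 2 := by linarith
    have h3 : ((K : ℝ) - 1) * (M - β * U) ≥ ((K : ℝ) - 1) * (M / 2) := by
      apply mul_le_mul_of_nonneg_left _ hKpos.le
      linarith
    have hKK := hcon' K (by omega) le_rfl
    nlinarith
  obtain ⟨j, hj1, hjK, hjξ⟩ := hexists
  -- invariant: d (ω k) ≤ ξ + β U for all k ≥ j
  have hinv : ∀ k, j ≤ k → d (ω k) ≤ ξ + β * U := by
    intro k hk
    induction k, hk using Nat.le_induction with
    | base => linarith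
    | succ n hn ih =>
      have hn1 : 1 ≤ n := le_trans hj1 hn
      by_cases hc : d (ω n) ≤ ξ
      · have := hstep' n hn1
        linarith
      · push_neg at hc
        have := hdec n hn1 hc.le
        linarith
  intro k hk
  exact hinv k (le_trans hjK hk)
end

section
/- Let E be a finite-dimensional real inner product space, let T : E → E be quasi-nonexpansive, and let D be the shrinkage function of T over the whole space E. Let σ > 0, let F : E → E be σ-strongly monotone with ‖F(ω)‖ ≤ U for all ω in the image of T, and let ω* be a solution of the variational inequality over fix(T): ω* ∈ fix(T) and ⟨ω − ω*, F(ω*)⟩ ≥ 0 for all ω ∈ fix(T). Let β > 0 be a constant step size, let (ω^k)_{k≥1} be generated by ω^{k+1} = T(ω^k) − β F(T(ω^k)), and let K ∈ ℕ with K ≥ 2. If there exists ξ > 0 such that D(ξ) ≥ max{2βU, 2·dist(ω^1, fix(T))/(K−1)}, then ‖T(ω^k) − ω^k‖ ≤ 2(ξ + βU) for all k ≥ K. -/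
open Metric
open scoped RealInnerProductSpace

variable {E : Type*} [NormedAddCommGroup E] [InnerProductSpace ℝ E] [FiniteDimensional ℝ E]

/-- Lemma 6(ii): for the constant-step HSDM iteration driven by a quasi-nonexpansive `T`
and a `σ`-strongly monotone `F` bounded by `U` on the image of `T`, if the shrinkage
function `D` of `T` over the whole space satisfies
`D(ξ) ≥ max{2βU, 2 dist(ω¹, fix T)/(K-1)}` for some `ξ > 0`, then
`‖T(ωᵏ) - ωᵏ‖ ≤ 2(ξ + βU)` for all `k ≥ K`. -/
theorem hsdm_residual_bound
    (T : E → E)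
    (hfixne : (fixSet T).Nonempty)
    (hqne : ∀ z ∈ fixSet T, ∀ x : E, ‖T x - z‖ ≤ ‖x - z‖)
    (σ : ℝ) (hσ : 0 < σ)
    (F : E → E)
    (hmono : ∀ u v : E, σ * ‖u - v‖ ^ 2 ≤ ⟪F u - F v, u - v⟫)
    (U : ℝ) (hU : ∀ x ∈ Set.range T, ‖F x‖ ≤ U)
    (ωs : E) (hωs : ωs ∈ fixSet T)
    (hVI : ∀ ω ∈ fixSet T, 0 ≤ ⟪ω - ωs, F ωs⟫)
    (β : ℝ) (hβ : 0 < β)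
    (ω : ℕ → E)
    (hrec : ∀ k ≥ 1, ω (k + 1) = T (ω k) - β • F (T (ω k)))
    (K : ℕ) (hK : 2 ≤ K)
    (ξ : ℝ) (hξ : 0 < ξ)
    (hD : ((max (2 * β * U) (2 * Metric.infDist (ω 1) (fixSet T) / ((K : ℝ) - 1)) : ℝ) : EReal)
      ≤ shrinkage T Set.univ ξ) :
    ∀ k ≥ K, ‖T (ω k) - ω k‖ ≤ 2 * (ξ + β * U) := by
  have hU0 : 0 ≤ U := le_trans (norm_nonneg _) (hU (T (ω 1)) ⟨ω 1, rfl⟩)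
  set S := fixSet T with hS
  set dd : E → ℝ := fun x => Metric.infDist x S with hdd
  set a : ℝ := max (2 * β * U) (2 * Metric.infDist (ω 1) S / ((K : ℝ) - 1)) with ha
  have haU : 2 * β * U ≤ a := le_max_left _ _
  have ha0 : 0 ≤ a := le_trans (by positivity) haU
  have hK1 : (1 : ℝ) ≤ (K : ℝ) - 1 := by
    have : (2 : ℝ) ≤ (K : ℝ) := by exact_mod_cast hK
    linarith
  have hd1 : dd (ω 1) ≤ ((K : ℝ) - 1) * (a / 2) := by
    have h2 : 2 * Metric.infDist (ω 1) S / ((K : ℝ) - 1) ≤ a := le_max_right _ _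
    have hKpos : (0 : ℝ) < (K : ℝ) - 1 := by linarith
    rw [div_le_iff₀ hKpos] at h2
    simp only [hdd]
    nlinarith
  -- shrink lemma from hD
  have hshrink : ∀ x : E, ξ ≤ dd x → a ≤ dd x - dd (T x) := by
    intro x hx
    have hmem : x ∈ {y ∈ (Set.univ : Set E) | ξ ≤ Metric.infDist y (fixSet T)} :=
      ⟨trivial, hx⟩
    have hle : shrinkage T Set.univ ξ
        ≤ ((Metric.infDist x (fixSet T) - Metric.infDist (T x) (fixSet T) : ℝ) : EReal) := by
      rw [shrinkage]
      exact iInf₂_le x hmem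
    have h := le_trans hD hle
    rw [EReal.coe_le_coe_iff] at h
    exact h
  -- T does not increase distance to fixed set
  have hTdd : ∀ x : E, dd (T x) ≤ dd x := by
    intro x
    refine le_of_forall_pos_le_add ?_
    intro ε hε
    obtain ⟨z, hz, hzd⟩ := (Metric.infDist_lt_iff hfixne).1
      (show Metric.infDist x S < dd x + ε by simp only [hdd]; linarith)
    have h1 : dd (T x) ≤ dist (T x) z := Metric.infDist_le_dist_of_mem hz
    have h2 : ‖T x - z‖ ≤ ‖x - z‖ := hqne z hz x
    rw [dist_eq_norm] at h1 hzd
    linarith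
  -- one-step perturbation bound
  have hstep : ∀ k, 1 ≤ k → dd (ω (k + 1)) ≤ dd (T (ω k)) + β * U := by
    intro k hk
    have hrk := hrec k hk
    have hdist : dist (ω (k + 1)) (T (ω k)) ≤ β * U := by
      rw [hrk, dist_eq_norm]
      have : T (ω k) - β • F (T (ω k)) - T (ω k) = -(β • F (T (ω k))) := by abel
      rw [this, norm_neg, norm_smul, Real.norm_eq_abs, abs_of_pos hβ]
      exact mul_le_mul_of_nonneg_left (hU (T (ω k)) ⟨ω k, rfl⟩) hβ.le
    calc dd (ω (k + 1)) ≤ dd (T (ω k)) + dist (ω (k + 1)) (T (ω k)) :=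
          Metric.infDist_le_infDist_add_dist
      _ ≤ dd (T (ω k)) + β * U := by linarith
  -- main induction
  have main : ∀ k, 1 ≤ k →
      dd (ω k) ≤ ξ + β * U ∨ dd (ω k) ≤ dd (ω 1) - ((k : ℝ) - 1) * (a / 2) := by
    intro k hk
    induction k, hk using Nat.le_induction with
    | base => right; simp
    | succ n hn ih =>
      rcases le_or_gt ξ (dd (ω n)) with hcase | hcase
      · have hs := hshrink (ω n) hcase
        have h3 : dd (ω (n + 1)) ≤ dd (ω n) - a / 2 := by
          have := hstep n hn
          linarith
        rcases ih with h | h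
        · left; linarith
        · right
          have : ((n + 1 : ℕ) : ℝ) - 1 = ((n : ℕ) : ℝ) - 1 + 1 := by push_cast; ring
          rw [this]
          nlinarith
      · left
        have h1 := hstep n hn
        have h2 := hTdd (ω n)
        linarith
  -- residual bound via distance
  have hres : ∀ x : E, ‖T x - x‖ ≤ 2 * dd x := by
    intro x
    refine le_of_forall_pos_le_add ?_
    intro ε hε
    obtain ⟨z, hz, hzd⟩ := (Metric.infDist_lt_iff hfixne).1
      (show Metric.infDist x S < dd x + ε / 2 by simp only [hdd]; linarith)
    rw [dist_eq_norm] at hzd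
    have h2 : ‖T x - z‖ ≤ ‖x - z‖ := hqne z hz x
    have h3' : ‖T x - x‖ ≤ ‖T x - z‖ + ‖x - z‖ := by
      have htri := dist_triangle (T x) z x
      rw [dist_eq_norm, dist_eq_norm, dist_eq_norm, norm_sub_rev z x] at htri
      exact htri
    linarith
  intro k hkK
  have hk1 : 1 ≤ k := by omega
  have hddnn : 0 ≤ dd (ω k) := Metric.infDist_nonneg
  have hbound : dd (ω k) ≤ ξ + β * U := by
    rcases main k hk1 with h | h
    · exact h
    · have hKk : ((K : ℝ) - 1) ≤ ((k : ℝ) - 1) := by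
        have : (K : ℝ) ≤ (k : ℝ) := by exact_mod_cast hkK
        linarith
      have : ((K : ℝ) - 1) * (a / 2) ≤ ((k : ℝ) - 1) * (a / 2) :=
        mul_le_mul_of_nonneg_right hKk (by linarith)
      nlinarith [mul_nonneg hβ.le hU0]
  have := hres (ω k)
  linarith
end

section
/- Let E be a finite-dimensional real inner product space, let T : E → E be quasi-nonexpansive, and let D be the shrinkage function of T over the whole space E. Let σ > 0, let F : E → E be σ-strongly monotone with ‖F(ω)‖ ≤ U for all ω in the image of T, and let ω* be a solution of the variational inequality over fix(T): ω* ∈ fix(T) and ⟨ω − ω*, F(ω*)⟩ ≥ 0 for all ω ∈ fix(T). Let β > 0 be a constant step size, let (ω^k)_{k≥1} be generated by ω^{k+1} = T(ω^k) − β F(T(ω^k)), and let K ∈ ℕ with K ≥ 2. If there exists ξ > 0 such that D(ξ) ≥ max{2βU, 2·dist(ω^1, fix(T))/(K−1)}, then ⟨T(ω^k) − ω*, −F(ω*)⟩ ≤ 3(ξ + βU)‖F(ω*)‖ for all k ≥ K. -/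
open Metric
open scoped RealInnerProductSpace

variable {E : Type*} [NormedAddCommGroup E] [InnerProductSpace ℝ E] [FiniteDimensional ℝ E]

/-- Lemma 6(iii): for the constant-step HSDM iteration driven by a quasi-nonexpansive `T`
and a `σ`-strongly monotone `F` bounded by `U` on the image of `T`, if the shrinkage
function `D` of `T` over the whole space satisfies
`D(ξ) ≥ max{2βU, 2 dist(ω¹, fix T)/(K-1)}` for some `ξ > 0`, then
`⟨T(ωᵏ) - ω*, -F(ω*)⟩ ≤ 3(ξ + βU)‖F(ω*)‖` for all `k ≥ K`. -/
theorem hsdm_inner_bound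
    (T : E → E)
    (hfixne : (fixSet T).Nonempty)
    (hqne : ∀ z ∈ fixSet T, ∀ x : E, ‖T x - z‖ ≤ ‖x - z‖)
    (σ : ℝ) (hσ : 0 < σ)
    (F : E → E)
    (hmono : ∀ u v : E, σ * ‖u - v‖ ^ 2 ≤ ⟪F u - F v, u - v⟫)
    (U : ℝ) (hU : ∀ x ∈ Set.range T, ‖F x‖ ≤ U)
    (ωs : E) (hωs : ωs ∈ fixSet T)
    (hVI : ∀ ω ∈ fixSet T, 0 ≤ ⟪ω - ωs, F ωs⟫)
    (β : ℝ) (hβ : 0 < β)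
    (ω : ℕ → E)
    (hrec : ∀ k ≥ 1, ω (k + 1) = T (ω k) - β • F (T (ω k)))
    (K : ℕ) (hK : 2 ≤ K)
    (ξ : ℝ) (hξ : 0 < ξ)
    (hD : ((max (2 * β * U) (2 * Metric.infDist (ω 1) (fixSet T) / ((K : ℝ) - 1)) : ℝ) : EReal)
      ≤ shrinkage T Set.univ ξ) :
    ∀ k ≥ K, ⟪T (ω k) - ωs, -F ωs⟫ ≤ 3 * (ξ + β * U) * ‖F ωs‖ := by
  set S := fixSet T with hSdef
  -- `S` is closed
  have hSclosed : IsClosed S := by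
    have hEq : S = ⋂ x : E, {z : E | ‖T x - z‖ ≤ ‖x - z‖} := by
      ext z
      constructor
      · intro hz
        exact Set.mem_iInter.mpr fun x => hqne z hz x
      · intro hz
        have hzz : ‖T z - z‖ ≤ ‖z - z‖ := Set.mem_iInter.mp hz z
        rw [sub_self, norm_zero] at hzz
        have : T z - z = 0 := norm_le_zero_iff.mp hzz
        exact sub_eq_zero.mp this
    rw [hEq]
    exact isClosed_iInter fun x =>
      isClosed_le ((continuous_const.sub continuous_id).norm)
        ((continuous_const.sub continuous_id).norm)
  have hU0 : 0 ≤ U := le_trans (norm_nonneg _) (hU ωs ⟨ωs, hωs⟩)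
  have hβU0 : 0 ≤ β * U := mul_nonneg hβ.le hU0
  -- quasi-nonexpansiveness on distances
  have hqd : ∀ x : E, infDist (T x) S ≤ infDist x S := by
    intro x
    obtain ⟨z, hz, hdz⟩ := hSclosed.exists_infDist_eq_dist hfixne x
    rw [hdz]
    calc infDist (T x) S ≤ dist (T x) z := infDist_le_dist_of_mem hz
      _ ≤ dist x z := by
          rw [dist_eq_norm, dist_eq_norm]
          exact hqne z hz x
  set M : ℝ := max (2 * β * U) (2 * infDist (ω 1) S / ((K : ℝ) - 1)) with hMdef
  have hM2βU : 2 * β * U ≤ M := le_max_left _ _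
  have hMd1 : 2 * infDist (ω 1) S / ((K : ℝ) - 1) ≤ M := le_max_right _ _
  have hK1 : (1 : ℝ) ≤ (K : ℝ) - 1 := by
    have h2K : (2 : ℝ) ≤ (K : ℝ) := by exact_mod_cast hK
    linarith
  -- the shrinkage hypothesis applied to concrete points
  have hshrink : ∀ x : E, ξ ≤ infDist x S → M ≤ infDist x S - infDist (T x) S := by
    intro x hx
    have h1 : shrinkage T Set.univ ξ
        ≤ ((infDist x S - infDist (T x) S : ℝ) : EReal) := by
      apply iInf₂_le x
      exact ⟨Set.mem_univ x, hx⟩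
    exact EReal.coe_le_coe_iff.mp (hD.trans h1)
  -- one-step distance estimate
  have hstep : ∀ k, 1 ≤ k → infDist (ω (k + 1)) S ≤ infDist (T (ω k)) S + β * U := by
    intro k hk
    have h1 : infDist (ω (k + 1)) S ≤ infDist (T (ω k)) S + dist (ω (k + 1)) (T (ω k)) :=
      infDist_le_infDist_add_dist
    have h2 : dist (ω (k + 1)) (T (ω k)) = β * ‖F (T (ω k))‖ := by
      rw [hrec k hk, dist_eq_norm]
      have : T (ω k) - β • F (T (ω k)) - T (ω k) = -(β • F (T (ω k))) := by abel
      rw [this, norm_neg, norm_smul, Real.norm_eq_abs, abs_of_pos hβ]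
    have h3 : ‖F (T (ω k))‖ ≤ U := hU _ ⟨ω k, rfl⟩
    have h4 : β * ‖F (T (ω k))‖ ≤ β * U := mul_le_mul_of_nonneg_left h3 hβ.le
    linarith
  -- there is an index `j ≤ K` where the distance drops below ξ
  have hexists : ∃ j, 1 ≤ j ∧ j ≤ K ∧ infDist (ω j) S < ξ := by
    by_contra hcon
    push_neg at hcon
    have key : ∀ j, 1 ≤ j → j ≤ K →
        infDist (ω j) S ≤ infDist (ω 1) S - ((j : ℝ) - 1) * (M / 2) := by
      intro j hj1
      induction j, hj1 using Nat.le_induction with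
      | base => intro _; norm_num
      | succ j hj ih =>
        intro hjK
        have hjK' : j ≤ K := le_trans (Nat.le_succ j) hjK
        have hξj : ξ ≤ infDist (ω j) S := hcon j hj hjK'
        have hsh := hshrink (ω j) hξj
        have hst := hstep j hj
        have hih := ih hjK'
        have hexp : (((j : ℕ) + 1 : ℕ) : ℝ) - 1 = ((j : ℝ) - 1) + 1 := by push_cast; ring
        rw [hexp, add_mul, one_mul]
        linarith
    have hKK := key K (le_trans (by norm_num) hK) le_rfl
    have hpos : (0 : ℝ) < (K : ℝ) - 1 := by linarith
    have hd1 : 2 * infDist (ω 1) S ≤ M * ((K : ℝ) - 1) := by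
      have := hMd1
      rw [div_le_iff₀ hpos] at this
      exact this
    have hξK := hcon K (le_trans (by norm_num) hK) le_rfl
    nlinarith
  obtain ⟨j, hj1, hjK, hdj⟩ := hexists
  -- once below ξ, stays below ξ + βU
  have hbound : ∀ k, j ≤ k → infDist (ω k) S ≤ ξ + β * U := by
    intro k hk
    induction k, hk using Nat.le_induction with
    | base => linarith
    | succ k hkj ih =>
      have hk1 : 1 ≤ k := le_trans hj1 hkj
      have hst := hstep k hk1
      by_cases hc : ξ ≤ infDist (ω k) S
      · have hsh := hshrink (ω k) hc
        linarith
      · push_neg at hc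
        have := hqd (ω k)
        linarith
  -- conclusion
  intro k hk
  have hdk : infDist (ω k) S ≤ ξ + β * U := hbound k (le_trans hjK hk)
  have hdTk : infDist (T (ω k)) S ≤ ξ + β * U := le_trans (hqd (ω k)) hdk
  obtain ⟨p, hpS, hpd⟩ := hSclosed.exists_infDist_eq_dist hfixne (T (ω k))
  have hnp : ‖T (ω k) - p‖ ≤ ξ + β * U := by
    rw [← dist_eq_norm, ← hpd]; exact hdTk
  have hsplit : T (ω k) - ωs = (T (ω k) - p) + (p - ωs) := by abel
  rw [hsplit, inner_add_left]
  have h1 : ⟪T (ω k) - p, -F ωs⟫ ≤ (ξ + β * U) * ‖F ωs‖ := by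
    calc ⟪T (ω k) - p, -F ωs⟫ ≤ ‖T (ω k) - p‖ * ‖-F ωs‖ := real_inner_le_norm _ _
      _ = ‖T (ω k) - p‖ * ‖F ωs‖ := by rw [norm_neg]
      _ ≤ (ξ + β * U) * ‖F ωs‖ := mul_le_mul_of_nonneg_right hnp (norm_nonneg _)
  have h2 : ⟪p - ωs, -F ωs⟫ ≤ 0 := by
    rw [inner_neg_right]
    linarith [hVI p hpS]
  have h3 : (0 : ℝ) ≤ (ξ + β * U) * ‖F ωs‖ :=
    mul_nonneg (by linarith) (norm_nonneg _)
  linarith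
end

section
/- Let E be a finite-dimensional real inner product space. For each t ∈ ℕ let T_t : E → E be quasi-nonexpansive with fix(T_t) ≠ ∅, and let φ_t : E → ℝ be σ-strongly convex (σ > 0) and continuously differentiable with L-Lipschitz gradient, where σ ≤ L. For each t let ω_t* denote the unique solution of the variational inequality: ω_t* ∈ fix(T_t) and ⟨ω − ω_t*, ∇φ_t(ω_t*)⟩ ≥ 0 for all ω ∈ fix(T_t). Assume: (a) there is a compact set Y ⊆ E with ω_t* ∈ Y for all t; (b) there is U > 0 with ‖∇φ_t(ω)‖ ≤ U for all t ∈ ℕ and all ω in the union over τ ∈ ℕ of the images of T_τ; (c) there is a function D : [0,∞) → [0,∞) with D(r) > 0 for all r > 0 such that D_t(r) ≥ D(r) for all t and all r ≥ 0, where D_t is the shrinkage function of T_t over E; (d) there are δ₁, δ₂ ≥ 0 with sup_t ‖ω_{t+1}* − ω_t*‖ ≤ δ₁ and sup_t dist(ω_t*, fix(T_{t+1})) ≤ δ₂. Let (ω_t)_{t≥1} be the restarted hybrid steepest descent sequence from an arbitrary ω₁ ∈ E: for each t, set y^{(1)} := ω_t, y^{(k+1)} := T_t(y^{(k)}) − β∇φ_t(T_t(y^{(k)}))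 for k = 1,…,K, and ω_{t+1} := y^{(K+1)}. Then for every γ > 0 there exist β ∈ (0, 2σ/L²) and K̄ ∈ ℕ such that for every K ≥ K̄ the sequence (ω_t) is bounded and limsup_{t→∞} ‖ω_t − ω_t*‖² ≤ (γ + δ₁²)/(1/2 − α), where α := (1 − τ(β))^K < 1/2 and τ(β) := 1 − √(1 − β(2σ − βL²)) ∈ (0,1). -/
open Metric Filter Topology
open scoped RealInnerProductSpace

variable {E : Type*} [NormedAddCommGroup E] [InnerProductSpace ℝ E] [FiniteDimensional ℝ E]

private lemma sq_le_imp' {a b : ℝ} (ha : 0 ≤ a) (hb : 0 ≤ b) (h : a ^ 2 ≤ b ^ 2) : a ≤ b := by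
  nlinarith
set_option maxHeartbeats 1000000 in
/-- Theorem 3: asymptotic tracking error of the restarted hybrid steepest descent method.
Under uniform quasi-nonexpansiveness and uniform quasi-shrinking of the time-varying
operators `T t`, uniform `σ`-strong convexity and `L`-Lipschitz gradients of the
time-varying selection functions `φ t`, a compact set containing all solutions, a uniform
gradient bound `U`, and bounded variations `δ₁, δ₂` of the solutions and fixed-point sets,
for every `γ > 0` there exist a step size `β ∈ (0, 2σ/L²)` and `K̄` such that for all
`K ≥ K̄` the restarted HSDM sequence (performing `K` HSDM iterations per time step) is
bounded and `limsup_t ‖ω_t - ω_t*‖² ≤ (γ + δ₁²)/(1/2 - α)` with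
`α = (1 - τ(β))^K < 1/2`. -/
theorem restarted_hsdm_tracking
    (T : ℕ → E → E)
    (hfixne : ∀ t, (fixSet (T t)).Nonempty)
    (hqne : ∀ t, ∀ z ∈ fixSet (T t), ∀ x : E, ‖T t x - z‖ ≤ ‖x - z‖)
    (σ L : ℝ) (hσ : 0 < σ) (hσL : σ ≤ L)
    (φ : ℕ → E → ℝ) (f' : ℕ → E → E)
    (hgrad : ∀ t, ∀ x : E, HasGradientAt (φ t) (f' t x) x)
    (hstrong : ∀ t, ∀ x y : E, φ t x + ⟪f' t x, y - x⟫ + σ / 2 * ‖y - x‖ ^ 2 ≤ φ t y)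
    (hlip : ∀ t, ∀ x y : E, ‖f' t x - f' t y‖ ≤ L * ‖x - y‖)
    (ωstar : ℕ → E)
    (hωstar_fix : ∀ t, ωstar t ∈ fixSet (T t))
    (hVI : ∀ t, ∀ ω ∈ fixSet (T t), 0 ≤ ⟪ω - ωstar t, f' t (ωstar t)⟫)
    -- (a) the solutions lie in a compact set
    (Y : Set E) (hY : IsCompact Y) (hωstarY : ∀ t, ωstar t ∈ Y)
    -- (b) uniform gradient bound on the union of the images of the operators
    (U : ℝ) (hUpos : 0 < U)
    (hU : ∀ t : ℕ, ∀ ω ∈ ⋃ τ : ℕ, Set.range (T τ), ‖f' t ω‖ ≤ U)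
    -- (c) uniform quasi-shrinking: a common lower bound on the shrinkage functions
    (D : ℝ → ℝ) (hDpos : ∀ r : ℝ, 0 < r → 0 < D r) (hDnonneg : ∀ r : ℝ, 0 ≤ r → 0 ≤ D r)
    (hDlb : ∀ t : ℕ, ∀ r : ℝ, 0 ≤ r → ((D r : ℝ) : EReal) ≤ shrinkage (T t) Set.univ r)
    -- (d) bounded variations
    (δ₁ δ₂ : ℝ) (hδ₁0 : 0 ≤ δ₁) (hδ₂0 : 0 ≤ δ₂)
    (hδ₁ : ∀ t : ℕ, ‖ωstar (t + 1) - ωstar t‖ ≤ δ₁)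
    (hδ₂ : ∀ t : ℕ, Metric.infDist (ωstar t) (fixSet (T (t + 1))) ≤ δ₂) :
    ∀ γ : ℝ, 0 < γ →
      ∃ β : ℝ, 0 < β ∧ β < 2 * σ / L ^ 2 ∧
        ∃ Kbar : ℕ, ∀ K : ℕ, Kbar ≤ K →
          (1 - (1 - Real.sqrt (1 - β * (2 * σ - β * L ^ 2)))) ^ K < 1 / 2 ∧
          ∀ ω : ℕ → E,
            (∀ t : ℕ, ω (t + 1) = (fun x => T t x - β • f' t (T t x))^[K] (ω t)) →
            Bornology.IsBounded (Set.range ω) ∧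
            Filter.limsup (fun t => ‖ω t - ωstar t‖ ^ 2) Filter.atTop ≤
              (γ + δ₁ ^ 2) /
                (1 / 2 - (1 - (1 - Real.sqrt (1 - β * (2 * σ - β * L ^ 2)))) ^ K) := by
  intro γ hγ
  have hL : 0 < L := lt_of_lt_of_le hσ hσL
  have hL2 : 0 < L ^ 2 := by positivity
  -- membership facts
  have hmemz : ∀ t, ωstar t ∈ ⋃ τ : ℕ, Set.range (T τ) := fun t =>
    Set.mem_iUnion.2 ⟨t, ⟨ωstar t, hωstar_fix t⟩⟩
  have hUz : ∀ t, ‖f' t (ωstar t)‖ ≤ U := fun t => hU t _ (hmemz t)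
  have hUw : ∀ t (x : E), ‖f' t (T t x)‖ ≤ U := fun t x =>
    hU t _ (Set.mem_iUnion.2 ⟨t, ⟨x, rfl⟩⟩)
  -- strong monotonicity of the gradients
  have mono : ∀ t (x y : E), σ * ‖x - y‖ ^ 2 ≤ ⟪f' t x - f' t y, x - y⟫ := by
    intro t x y
    have h1 := hstrong t x y
    have h2 := hstrong t y x
    have e1 : ⟪f' t x, y - x⟫ = -⟪f' t x, x - y⟫ := by
      rw [← inner_neg_right]; congr 1; abel
    have e2 : ‖y - x‖ = ‖x - y‖ := norm_sub_rev _ _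
    rw [inner_sub_left]
    rw [e1, e2] at h1
    linarith only [h1, h2]
  -- choice of r and β
  set r : ℝ := σ * γ / (16 * U) with hr_def
  have hr : 0 < r := by positivity
  set Dr : ℝ := D r with hDr_def
  have hDr : 0 < Dr := hDpos r hr
  set β : ℝ := min (min (σ / L ^ 2) (1 / (2 * σ)))
      (min (min (Dr / (2 * U)) (r / U)) (γ * σ / (4 * U ^ 2))) with hβ_def
  have hβpos : 0 < β := by
    refine lt_min (lt_min (by positivity) (by positivity)) (lt_min (lt_min ?_ ?_) ?_) <;>
      positivity
  have hβ1 : β * L ^ 2 ≤ σ := by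
    have h : β ≤ σ / L ^ 2 := le_trans (min_le_left _ _) (min_le_left _ _)
    rw [le_div_iff₀ hL2] at h
    linarith only [h]
  have hβ2 : 2 * β * σ ≤ 1 := by
    have h : β ≤ 1 / (2 * σ) := le_trans (min_le_left _ _) (min_le_right _ _)
    rw [le_div_iff₀ (by positivity : (0:ℝ) < 2 * σ)] at h
    linarith only [h]
  have hβ3 : 2 * (β * U) ≤ Dr := by
    have h : β ≤ Dr / (2 * U) := le_trans (min_le_right _ _)
      (le_trans (min_le_left _ _) (min_le_left _ _))
    rw [le_div_iff₀ (by positivity : (0:ℝ) < 2 * U)] at h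
    linarith only [h]
  have hβ4 : β * U ≤ r := by
    have h : β ≤ r / U := le_trans (min_le_right _ _)
      (le_trans (min_le_left _ _) (min_le_right _ _))
    rw [le_div_iff₀ hUpos] at h
    linarith only [h]
  have hβ5 : β * U ^ 2 ≤ γ * σ / 4 := by
    have h : β ≤ γ * σ / (4 * U ^ 2) := le_trans (min_le_right _ _) (min_le_right _ _)
    rw [le_div_iff₀ (by positivity : (0:ℝ) < 4 * U ^ 2)] at h
    linarith only [h]
  have hβlt : β < 2 * σ / L ^ 2 := by
    have h1 : β ≤ σ / L ^ 2 := le_trans (min_le_left _ _) (min_le_left _ _)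
    have h2 : σ / L ^ 2 < 2 * σ / L ^ 2 := by
      rw [div_lt_div_iff₀ hL2 hL2]
      have h3 : 0 < σ * L ^ 2 := by positivity
      linarith only [h3]
    linarith only [h1, h2]
  clear_value β
  clear_value Dr
  clear_value r
  have hβU : 0 ≤ β * U := by positivity
  -- properties of the contraction factor
  have hm0 : β * σ ≤ β * (2 * σ - β * L ^ 2) := by
    have h := mul_nonneg hβpos.le (by linarith only [hβ1] : (0:ℝ) ≤ σ - β * L ^ 2)
    nlinarith only [h]
  have hm1 : β * (2 * σ - β * L ^ 2) ≤ 1 := by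
    have h : (0:ℝ) ≤ β ^ 2 * L ^ 2 := by positivity
    nlinarith only [h, hβ2]
  have hmpos : 0 < β * (2 * σ - β * L ^ 2) := lt_of_lt_of_le (mul_pos hβpos hσ) hm0
  set ρ : ℝ := Real.sqrt (1 - β * (2 * σ - β * L ^ 2)) with hρ_def
  have hρ0 : 0 ≤ ρ := Real.sqrt_nonneg _
  have hρsq : ρ ^ 2 = 1 - β * (2 * σ - β * L ^ 2) := Real.sq_sqrt (by linarith only [hm1])
  clear_value ρ
  have hρ1 : ρ < 1 := by nlinarith only [hρ0, hρsq, hmpos]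
  have hτ : β * σ / 2 ≤ 1 - ρ := by
    have h1 : ρ ≤ 1 - β * (2 * σ - β * L ^ 2) / 2 := by
      have h2 : (1 : ℝ) - β * (2 * σ - β * L ^ 2) ≤ (1 - β * (2 * σ - β * L ^ 2) / 2) ^ 2 := by
        nlinarith only [sq_nonneg (β * (2 * σ - β * L ^ 2))]
      have h3 := Real.sqrt_le_sqrt h2
      rw [Real.sqrt_sq (by linarith only [hm1])] at h3
      rw [hρ_def]; exact h3
    linarith only [h1, hm0]
  have hq0 : (0 : ℝ) ≤ 1 - 2 * β * σ := by linarith only [hβ2]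
  have hq1 : (1 : ℝ) - 2 * β * σ < 1 := by
    have h := mul_pos hβpos hσ
    linarith only [h]
  -- constants
  set c₀ : ℝ := 2 * U / σ + δ₁ with hc₀_def
  clear_value c₀
  have hc₀pos : 0 < c₀ := by
    rw [hc₀_def]
    have h : 0 < 2 * U / σ := by positivity
    linarith only [h, hδ₁0]
  set M₀ : ℝ := 2 * c₀ + 1 with hM₀_def
  clear_value M₀
  have hM₀pos : 0 < M₀ := by rw [hM₀_def]; linarith only [hc₀pos]
  set N : ℕ := ⌈2 * M₀ / Dr⌉₊ + 1 with hN_def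
  clear_value N
  have hNreal : 2 * M₀ / Dr + 1 ≤ (N : ℝ) := by
    rw [hN_def]; push_cast; linarith only [Nat.le_ceil (2 * M₀ / Dr)]
  set E₀ : ℝ := (M₀ + (N : ℝ) * (β * U)) ^ 2 with hE₀_def
  clear_value E₀
  have hE₀0 : 0 ≤ E₀ := by rw [hE₀_def]; exact sq_nonneg _
  obtain ⟨n₁, hn₁⟩ : ∃ n : ℕ, ρ ^ n < 1 / 2 :=
    exists_pow_lt_of_lt_one (by norm_num) hρ1
  obtain ⟨n₂, hn₂⟩ : ∃ n : ℕ, (1 - 2 * β * σ) ^ n < γ / (4 * (E₀ + 1)) :=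
    exists_pow_lt_of_lt_one (by positivity) hq1
  refine ⟨β, hβpos, hβlt, N + n₁ + n₂, ?_⟩
  intro K hK
  have hρK : ρ ^ K < 1 / 2 :=
    lt_of_le_of_lt (pow_le_pow_of_le_one hρ0 hρ1.le (by omega)) hn₁
  have hαeq : (1 - (1 - Real.sqrt (1 - β * (2 * σ - β * L ^ 2)))) = ρ := by
    rw [sub_sub_cancel, hρ_def]
  constructor
  · rw [hαeq]; exact hρK
  intro ω hω
  -- per-step lemmas
  have step_norm : ∀ t (x : E),
      ‖(T t x - β • f' t (T t x)) - ωstar t‖ ≤ ρ * ‖x - ωstar t‖ + β * U := by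
    intro t x
    set w := T t x with hw
    set z := ωstar t with hz
    have contr : ‖(w - β • f' t w) - (z - β • f' t z)‖ ≤ ρ * ‖w - z‖ := by
      apply sq_le_imp' (norm_nonneg _) (mul_nonneg hρ0 (norm_nonneg _))
      have hid : (w - β • f' t w) - (z - β • f' t z) = (w - z) - β • (f' t w - f' t z) := by
        rw [smul_sub]; abel
      rw [hid]
      have hexp : ‖(w - z) - β • (f' t w - f' t z)‖ ^ 2
          = ‖w - z‖ ^ 2 - 2 * (β * ⟪w - z, f' t w - f' t z⟫) + β ^ 2 * ‖f' t w - f' t z‖ ^ 2 := by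
        rw [norm_sub_sq_real, real_inner_smul_right, norm_smul, Real.norm_eq_abs,
          abs_of_nonneg hβpos.le]
        ring
      have h1 : ‖f' t w - f' t z‖ ^ 2 ≤ L ^ 2 * ‖w - z‖ ^ 2 := by
        have h1a := mul_le_mul (hlip t w z) (hlip t w z) (norm_nonneg _)
          (mul_nonneg hL.le (norm_nonneg _))
        nlinarith only [h1a]
      have h2 : σ * ‖w - z‖ ^ 2 ≤ ⟪w - z, f' t w - f' t z⟫ := by
        rw [real_inner_comm]; exact mono t w z
      have h3 : β ^ 2 * ‖f' t w - f' t z‖ ^ 2 ≤ β ^ 2 * (L ^ 2 * ‖w - z‖ ^ 2) :=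
        mul_le_mul_of_nonneg_left h1 (sq_nonneg β)
      have h4 : β * (σ * ‖w - z‖ ^ 2) ≤ β * ⟪w - z, f' t w - f' t z⟫ :=
        mul_le_mul_of_nonneg_left h2 hβpos.le
      rw [hexp, mul_pow, hρsq]
      nlinarith only [h3, h4]
    have hid2 : (w - β • f' t w) - z = ((w - β • f' t w) - (z - β • f' t z)) - β • f' t z := by
      abel
    have hfz : ‖β • f' t z‖ ≤ β * U := by
      rw [norm_smul, Real.norm_eq_abs, abs_of_nonneg hβpos.le]
      exact mul_le_mul_of_nonneg_left (hUz t) hβpos.le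
    have hwz : ρ * ‖w - z‖ ≤ ρ * ‖x - z‖ :=
      mul_le_mul_of_nonneg_left (hqne t z (hωstar_fix t) x) hρ0
    calc ‖(w - β • f' t w) - z‖
        ≤ ‖(w - β • f' t w) - (z - β • f' t z)‖ + ‖β • f' t z‖ := by
          rw [hid2]; exact norm_sub_le _ _
      _ ≤ ρ * ‖w - z‖ + β * U := by linarith only [contr, hfz]
      _ ≤ ρ * ‖x - z‖ + β * U := by linarith only [hwz]
  have step_sq : ∀ t (x : E),
      ‖(T t x - β • f' t (T t x)) - ωstar t‖ ^ 2 ≤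
        (1 - 2 * β * σ) * ‖x - ωstar t‖ ^ 2
          + 2 * (β * U) * Metric.infDist (T t x) (fixSet (T t)) + β ^ 2 * U ^ 2 := by
    intro t x
    set w := T t x with hw
    set z := ωstar t with hz
    set F := fixSet (T t) with hF
    have hVIb : -(U * Metric.infDist w F) ≤ ⟪w - z, f' t z⟫ := by
      have hkey : ∀ ε : ℝ, 0 < ε → -⟪w - z, f' t z⟫ ≤ U * Metric.infDist w F + ε := by
        intro ε hε
        obtain ⟨p, hpF, hpd⟩ := (Metric.infDist_lt_iff (hfixne t)).mp
          (show Metric.infDist w F < Metric.infDist w F + ε / U by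
            have h : 0 < ε / U := by positivity
            linarith only [h])
        have hVIp := hVI t p hpF
        have hsplit : ⟪w - z, f' t z⟫ = ⟪w - p, f' t z⟫ + ⟪p - z, f' t z⟫ := by
          rw [← inner_add_left]; congr 1; abel
        have habs := abs_real_inner_le_norm (w - p) (f' t z)
        have hwd : ‖w - p‖ ≤ Metric.infDist w F + ε / U := by
          rw [← dist_eq_norm]; exact hpd.le
        have h6 : ‖w - p‖ * ‖f' t z‖ ≤ (Metric.infDist w F + ε / U) * U :=
          mul_le_mul hwd (hUz t) (norm_nonneg _)
            (add_nonneg Metric.infDist_nonneg (by positivity))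
        have h7 : (Metric.infDist w F + ε / U) * U = U * Metric.infDist w F + ε := by
          field_simp
        have h8 := neg_abs_le ⟪w - p, f' t z⟫
        linarith only [hVIp, hsplit, habs, hwd, h6, h7, h8]
      linarith only [le_of_forall_pos_le_add hkey]
    have hexp : ‖(w - β • f' t w) - z‖ ^ 2
        = ‖w - z‖ ^ 2 - 2 * (β * ⟪w - z, f' t w⟫) + β ^ 2 * ‖f' t w‖ ^ 2 := by
      have hid : (w - β • f' t w) - z = (w - z) - β • f' t w := by abel
      rw [hid, norm_sub_sq_real, real_inner_smul_right, norm_smul, Real.norm_eq_abs,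
        abs_of_nonneg hβpos.le]
      ring
    have hsplit2 : ⟪w - z, f' t w⟫ = ⟪w - z, f' t w - f' t z⟫ + ⟪w - z, f' t z⟫ := by
      rw [← inner_add_right]; congr 1; abel
    have hm2 : σ * ‖w - z‖ ^ 2 ≤ ⟪w - z, f' t w - f' t z⟫ := by
      rw [real_inner_comm]; exact mono t w z
    have hwz : ‖w - z‖ ≤ ‖x - z‖ := hqne t z (hωstar_fix t) x
    have hA : ‖w - z‖ ^ 2 ≤ ‖x - z‖ ^ 2 := by
      have h := mul_le_mul hwz hwz (norm_nonneg _) (norm_nonneg _)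
      nlinarith only [h]
    have hG : ‖f' t w‖ ^ 2 ≤ U ^ 2 := by
      have h := mul_le_mul (hUw t x) (hUw t x) (norm_nonneg _) hUpos.le
      nlinarith only [h]
    have p1 : β * (σ * ‖w - z‖ ^ 2) ≤ β * ⟪w - z, f' t w - f' t z⟫ :=
      mul_le_mul_of_nonneg_left hm2 hβpos.le
    have p2 : β * -(U * Metric.infDist w F) ≤ β * ⟪w - z, f' t z⟫ :=
      mul_le_mul_of_nonneg_left hVIb hβpos.le
    have p3 : β ^ 2 * ‖f' t w‖ ^ 2 ≤ β ^ 2 * U ^ 2 :=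
      mul_le_mul_of_nonneg_left hG (sq_nonneg β)
    have p4 : (1 - 2 * β * σ) * ‖w - z‖ ^ 2 ≤ (1 - 2 * β * σ) * ‖x - z‖ ^ 2 :=
      mul_le_mul_of_nonneg_left hA hq0
    rw [hexp, hsplit2]
    nlinarith only [p1, p2, p3, p4]
  have step_dist : ∀ t (x : E),
      Metric.infDist (T t x - β • f' t (T t x)) (fixSet (T t)) ≤
        Metric.infDist (T t x) (fixSet (T t)) + β * U := by
    intro t x
    have h := Metric.infDist_le_infDist_add_dist
      (x := T t x - β • f' t (T t x)) (y := T t x) (s := fixSet (T t))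
    have hd : dist (T t x - β • f' t (T t x)) (T t x) = β * ‖f' t (T t x)‖ := by
      rw [dist_eq_norm]
      have h2 : T t x - β • f' t (T t x) - T t x = -(β • f' t (T t x)) := by abel
      rw [h2, norm_neg, norm_smul, Real.norm_eq_abs, abs_of_nonneg hβpos.le]
    have h2 : β * ‖f' t (T t x)‖ ≤ β * U := mul_le_mul_of_nonneg_left (hUw t x) hβpos.le
    linarith only [h, hd, h2]
  have nonexp_dist : ∀ t (x : E),
      Metric.infDist (T t x) (fixSet (T t)) ≤ Metric.infDist x (fixSet (T t)) := by
    intro t x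
    by_contra hlt
    push_neg at hlt
    obtain ⟨p, hpF, hpd⟩ := (Metric.infDist_lt_iff (hfixne t)).mp hlt
    have h1 : Metric.infDist (T t x) (fixSet (T t)) ≤ dist (T t x) p :=
      Metric.infDist_le_dist_of_mem hpF
    have h2 : dist (T t x) p ≤ dist x p := by
      rw [dist_eq_norm, dist_eq_norm]; exact hqne t p hpF x
    linarith only [h1, h2, hpd]
  have shrink : ∀ t (x : E), r ≤ Metric.infDist x (fixSet (T t)) →
      Metric.infDist (T t x) (fixSet (T t)) ≤ Metric.infDist x (fixSet (T t)) - Dr := by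
    intro t x hx
    have h1 := hDlb t r hr.le
    have h2 : shrinkage (T t) Set.univ r ≤
        ((Metric.infDist x (fixSet (T t)) - Metric.infDist (T t x) (fixSet (T t)) : ℝ) :
          EReal) := by
      unfold shrinkage
      exact iInf₂_le x ⟨Set.mem_univ x, hx⟩
    have h3 := EReal.coe_le_coe_iff.mp (le_trans h1 h2)
    rw [hDr_def]
    linarith only [h3]
  -- key single-time-step estimate
  have key : ∀ t : ℕ, ‖ω t - ωstar t‖ ≤ M₀ → ‖ω (t + 1) - ωstar t‖ ^ 2 ≤ γ / 2 := by
    intro t hat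
    set y : ℕ → E := fun k => (fun x => T t x - β • f' t (T t x))^[k] (ω t) with hy_def
    have hy0 : y 0 = ω t := rfl
    have hysucc : ∀ k, y (k + 1) = T t (y k) - β • f' t (T t (y k)) := fun k =>
      Function.iterate_succ_apply' _ k (ω t)
    have hyK : ω (t + 1) = y K := hω t
    have hb_step : ∀ k, ‖y (k + 1) - ωstar t‖ ≤ ρ * ‖y k - ωstar t‖ + β * U := by
      intro k; rw [hysucc k]; exact step_norm t (y k)
    have hb_slow : ∀ k : ℕ, ‖y k - ωstar t‖ ≤ ‖y 0 - ωstar t‖ + k * (β * U) := by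
      intro k; induction k with
      | zero => simp
      | succ k ih =>
        have h1 := hb_step k
        have h2 : ρ * ‖y k - ωstar t‖ ≤ 1 * ‖y k - ωstar t‖ :=
          mul_le_mul_of_nonneg_right hρ1.le (norm_nonneg _)
        push_cast
        push_cast at ih
        linarith only [h1, h2, ih]
    have hd_grow : ∀ k, Metric.infDist (y (k + 1)) (fixSet (T t)) ≤
        Metric.infDist (y k) (fixSet (T t)) + β * U := by
      intro k
      rw [hysucc k]
      have h1 := step_dist t (y k)
      have h2 := nonexp_dist t (y k)
      linarith only [h1, h2]
    have hd_shrink : ∀ k, r ≤ Metric.infDist (y k) (fixSet (T t)) →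
        Metric.infDist (y (k + 1)) (fixSet (T t)) ≤
          Metric.infDist (y k) (fixSet (T t)) - Dr + β * U := by
      intro k hk
      rw [hysucc k]
      have h1 := step_dist t (y k)
      have h2 := shrink t (y k) hk
      linarith only [h1, h2]
    have hd0 : Metric.infDist (y 0) (fixSet (T t)) ≤ M₀ := by
      have h1 : Metric.infDist (y 0) (fixSet (T t)) ≤ dist (y 0) (ωstar t) :=
        Metric.infDist_le_dist_of_mem (hωstar_fix t)
      rw [dist_eq_norm, hy0] at h1
      rw [hy0]
      linarith only [h1, hat]
    have hfound : ∃ k₀, k₀ ≤ N ∧ Metric.infDist (y k₀) (fixSet (T t)) < r := by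
      by_contra hno
      push_neg at hno
      have hdec : ∀ k, k ≤ N → Metric.infDist (y k) (fixSet (T t)) ≤ M₀ - k * (Dr / 2) := by
        intro k
        induction k with
        | zero => intro _; simpa using hd0
        | succ k ih =>
          intro hk1
          have hk : k ≤ N := by omega
          have h1 := hno k hk
          have h2 := hd_shrink k h1
          have h3 := ih hk
          push_cast
          push_cast at h3
          linarith only [h2, h3, hβ3]
      have h4 := hdec N le_rfl
      have h5 : (0 : ℝ) ≤ Metric.infDist (y N) (fixSet (T t)) := Metric.infDist_nonneg
      have h7 : 2 * M₀ / Dr * Dr = 2 * M₀ := div_mul_cancel₀ _ hDr.ne'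
      have h8 : (2 * M₀ / Dr + 1) * Dr ≤ (N : ℝ) * Dr :=
        mul_le_mul_of_nonneg_right hNreal hDr.le
      nlinarith only [h4, h5, h7, h8, hDr]
    obtain ⟨k₀, hk₀N, hk₀⟩ := hfound
    have hstay' : ∀ j, Metric.infDist (y (k₀ + j)) (fixSet (T t)) ≤ r + β * U := by
      intro j; induction j with
      | zero =>
        have hidx : k₀ + 0 = k₀ := rfl
        rw [hidx]; linarith only [hk₀, hβU]
      | succ j ih =>
        have hidx : k₀ + (j + 1) = (k₀ + j) + 1 := rfl
        rw [hidx]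
        rcases le_or_gt r (Metric.infDist (y (k₀ + j)) (fixSet (T t))) with hge | hlt
        · have h := hd_shrink (k₀ + j) hge
          linarith only [h, ih, hβ3, hβU]
        · have h := hd_grow (k₀ + j)
          linarith only [h, hlt]
    have hstay : ∀ k, N ≤ k → Metric.infDist (y k) (fixSet (T t)) ≤ r + β * U := by
      intro k hk
      have hidx : k = k₀ + (k - k₀) := by omega
      rw [hidx]; exact hstay' _
    have hsq_step : ∀ k, N ≤ k →
        ‖y (k + 1) - ωstar t‖ ^ 2 ≤
          (1 - 2 * β * σ) * ‖y k - ωstar t‖ ^ 2 + β * σ * γ / 2 := by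
      intro k hk
      have h1 : ‖y (k + 1) - ωstar t‖ ^ 2 ≤ (1 - 2 * β * σ) * ‖y k - ωstar t‖ ^ 2
          + 2 * (β * U) * Metric.infDist (T t (y k)) (fixSet (T t)) + β ^ 2 * U ^ 2 := by
        rw [hysucc k]; exact step_sq t (y k)
      have h2 : Metric.infDist (T t (y k)) (fixSet (T t)) ≤ 2 * r := by
        have h2a := nonexp_dist t (y k)
        have h2b := hstay k hk
        linarith only [h2a, h2b, hβ4]
      have h3 : 2 * (β * U) * Metric.infDist (T t (y k)) (fixSet (T t)) ≤
          2 * (β * U) * (2 * r) :=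
        mul_le_mul_of_nonneg_left h2 (by positivity)
      have h4 : 2 * (β * U) * (2 * r) = β * σ * γ / 4 := by
        rw [hr_def]; field_simp; ring
      have h5 : β * (β * U ^ 2) ≤ β * (γ * σ / 4) :=
        mul_le_mul_of_nonneg_left hβ5 hβpos.le
      nlinarith only [h1, h3, h4, h5]
    have hgeo : ∀ j : ℕ, ‖y (N + j) - ωstar t‖ ^ 2 ≤ (1 - 2 * β * σ) ^ j * E₀ + γ / 4 := by
      intro j; induction j with
      | zero =>
        have h1 := hb_slow N
        rw [hy0] at h1
        have h3 : ‖y N - ωstar t‖ ≤ M₀ + (N : ℝ) * (β * U) := by linarith only [h1, hat]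
        have h4 : ‖y N - ωstar t‖ ^ 2 ≤ E₀ := by
          rw [hE₀_def]; exact pow_le_pow_left₀ (norm_nonneg _) h3 2
        have hidx : N + 0 = N := rfl
        rw [hidx, pow_zero, one_mul]
        linarith only [h4, hγ]
      | succ j ih =>
        have h1 := hsq_step (N + j) (Nat.le_add_right N j)
        have hidx : N + (j + 1) = (N + j) + 1 := rfl
        rw [hidx]
        have h2 : (1 - 2 * β * σ) * ‖y (N + j) - ωstar t‖ ^ 2 ≤
            (1 - 2 * β * σ) * ((1 - 2 * β * σ) ^ j * E₀ + γ / 4) :=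
          mul_le_mul_of_nonneg_left ih hq0
        have h3 : (1 - 2 * β * σ) * ((1 - 2 * β * σ) ^ j * E₀) =
            (1 - 2 * β * σ) ^ (j + 1) * E₀ := by ring
        nlinarith only [h1, h2, h3]
    have hKN : N ≤ K := by omega
    have h1 := hgeo (K - N)
    have hidx2 : N + (K - N) = K := by omega
    rw [hidx2] at h1
    have h2 : (1 - 2 * β * σ) ^ (K - N) ≤ (1 - 2 * β * σ) ^ n₂ :=
      pow_le_pow_of_le_one hq0 (by linarith only [hq1, mul_pos hβpos hσ]) (by omega)
    have h3 : (1 - 2 * β * σ) ^ (K - N) * E₀ ≤ (1 - 2 * β * σ) ^ n₂ * E₀ :=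
      mul_le_mul_of_nonneg_right h2 hE₀0
    have h4 : (1 - 2 * β * σ) ^ n₂ * E₀ ≤ γ / (4 * (E₀ + 1)) * E₀ :=
      mul_le_mul_of_nonneg_right hn₂.le hE₀0
    have h5 : γ / (4 * (E₀ + 1)) * E₀ ≤ γ / 4 := by
      rw [div_mul_eq_mul_div, div_le_div_iff₀ (by positivity) (by norm_num)]
      nlinarith only [hγ, hE₀0]
    rw [hyK]
    linarith only [h1, h3, h4, h5]
  -- global recursion
  have htri : ∀ t, ‖ω (t + 1) - ωstar (t + 1)‖ ≤ ‖ω (t + 1) - ωstar t‖ + δ₁ := by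
    intro t
    have h1 := hδ₁ t
    calc ‖ω (t + 1) - ωstar (t + 1)‖
        = ‖(ω (t + 1) - ωstar t) - (ωstar (t + 1) - ωstar t)‖ := by congr 1; abel
      _ ≤ ‖ω (t + 1) - ωstar t‖ + ‖ωstar (t + 1) - ωstar t‖ := norm_sub_le _ _
      _ ≤ _ := by linarith only [h1]
  have hiter_norm : ∀ t, ‖ω (t + 1) - ωstar t‖ ≤ ρ ^ K * ‖ω t - ωstar t‖ + 2 * U / σ := by
    intro t
    have h : ∀ k : ℕ, ‖(fun x => T t x - β • f' t (T t x))^[k] (ω t) - ωstar t‖ ≤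
        ρ ^ k * ‖ω t - ωstar t‖ + 2 * U / σ := by
      intro k; induction k with
      | zero =>
        have h0 : (0:ℝ) ≤ 2 * U / σ := by positivity
        simp only [Function.iterate_zero_apply, pow_zero, one_mul]
        linarith only [h0]
      | succ k ih =>
        rw [Function.iterate_succ_apply']
        have h1 := step_norm t ((fun x => T t x - β • f' t (T t x))^[k] (ω t))
        have h2 : ρ * ‖(fun x => T t x - β • f' t (T t x))^[k] (ω t) - ωstar t‖ ≤
            ρ * (ρ ^ k * ‖ω t - ωstar t‖ + 2 * U / σ) :=
          mul_le_mul_of_nonneg_left ih hρ0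
        have h3 : ρ * (2 * U / σ) + β * U ≤ 2 * U / σ := by
          have h4 : (β * σ / 2) * (2 * U / σ) ≤ (1 - ρ) * (2 * U / σ) :=
            mul_le_mul_of_nonneg_right hτ (by positivity)
          have h5 : (β * σ / 2) * (2 * U / σ) = β * U := by field_simp
          linarith only [h4, h5]
        have h6 : ρ * (ρ ^ k * ‖ω t - ωstar t‖) = ρ ^ (k + 1) * ‖ω t - ωstar t‖ := by ring
        linarith only [h1, h2, h3, h6]
    have h7 := h K
    rw [← hω t] at h7
    exact h7
  have crude : ∀ t, ‖ω (t + 1) - ωstar (t + 1)‖ ≤ (1 / 2) * ‖ω t - ωstar t‖ + c₀ := by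
    intro t
    have h1 := hiter_norm t
    have h2 := htri t
    have h3 : ρ ^ K * ‖ω t - ωstar t‖ ≤ (1 / 2) * ‖ω t - ωstar t‖ :=
      mul_le_mul_of_nonneg_right hρK.le (norm_nonneg _)
    rw [hc₀_def]
    linarith only [h1, h2, h3]
  have decay : ∀ t : ℕ, ‖ω t - ωstar t‖ ≤ (1 / 2 : ℝ) ^ t * ‖ω 0 - ωstar 0‖ + 2 * c₀ := by
    intro t; induction t with
    | zero =>
      simp only [pow_zero, one_mul]
      linarith only [hc₀pos]
    | succ t ih =>
      have h1 := crude t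
      have h2 : (1 / 2 : ℝ) * ‖ω t - ωstar t‖ ≤
          (1 / 2 : ℝ) * ((1 / 2 : ℝ) ^ t * ‖ω 0 - ωstar 0‖ + 2 * c₀) := by
        linarith only [ih]
      have h3 : (1 / 2 : ℝ) * ((1 / 2 : ℝ) ^ t * ‖ω 0 - ωstar 0‖) =
          (1 / 2 : ℝ) ^ (t + 1) * ‖ω 0 - ωstar 0‖ := by ring
      linarith only [h1, h2, h3, hc₀pos]
  constructor
  · rw [isBounded_iff_forall_norm_le]
    obtain ⟨RY, hRY⟩ := isBounded_iff_forall_norm_le.mp hY.isBounded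
    refine ⟨RY + (‖ω 0 - ωstar 0‖ + 2 * c₀), ?_⟩
    rintro x ⟨t, rfl⟩
    have h1 := decay t
    have h2 := hRY (ωstar t) (hωstarY t)
    have h3 : ‖ω t‖ ≤ ‖ω t - ωstar t‖ + ‖ωstar t‖ := by
      calc ‖ω t‖ = ‖(ω t - ωstar t) + ωstar t‖ := by congr 1; abel
        _ ≤ _ := norm_add_le _ _
    have h4 : (1 / 2 : ℝ) ^ t ≤ 1 := pow_le_one₀ (by norm_num) (by norm_num)
    have h5 : (1 / 2 : ℝ) ^ t * ‖ω 0 - ωstar 0‖ ≤ 1 * ‖ω 0 - ωstar 0‖ :=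
      mul_le_mul_of_nonneg_right h4 (norm_nonneg _)
    linarith only [h1, h2, h3, h5]
  · obtain ⟨T₀, hT₀⟩ : ∃ T₀ : ℕ, (1 / 2 : ℝ) ^ T₀ * ‖ω 0 - ωstar 0‖ ≤ 1 := by
      obtain ⟨n, hn⟩ := exists_pow_lt_of_lt_one
        (show (0 : ℝ) < 1 / (‖ω 0 - ωstar 0‖ + 1) by positivity)
        (show (1 / 2 : ℝ) < 1 by norm_num)
      refine ⟨n, ?_⟩
      have ha := norm_nonneg (ω 0 - ωstar 0)
      have h1 : (1 / 2 : ℝ) ^ n * ‖ω 0 - ωstar 0‖ ≤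
          (1 / (‖ω 0 - ωstar 0‖ + 1)) * ‖ω 0 - ωstar 0‖ :=
        mul_le_mul_of_nonneg_right hn.le ha
      have h2 : (1 / (‖ω 0 - ωstar 0‖ + 1)) * ‖ω 0 - ωstar 0‖ ≤ 1 := by
        rw [div_mul_eq_mul_div, one_mul, div_le_one (by positivity)]
        linarith only []
      linarith only [h1, h2]
    have hev : ∀ s, T₀ + 1 ≤ s → ‖ω s - ωstar s‖ ^ 2 ≤ γ + 2 * δ₁ ^ 2 := by
      intro s hs
      obtain ⟨t, rfl⟩ : ∃ t, s = t + 1 := ⟨s - 1, by omega⟩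
      have hts : T₀ ≤ t := by omega
      have hM : ‖ω t - ωstar t‖ ≤ M₀ := by
        have h1 := decay t
        have h2 : (1 / 2 : ℝ) ^ t ≤ (1 / 2 : ℝ) ^ T₀ :=
          pow_le_pow_of_le_one (by norm_num) (by norm_num) hts
        have h3 : (1 / 2 : ℝ) ^ t * ‖ω 0 - ωstar 0‖ ≤ (1 / 2 : ℝ) ^ T₀ * ‖ω 0 - ωstar 0‖ :=
          mul_le_mul_of_nonneg_right h2 (norm_nonneg _)
        rw [hM₀_def]
        linarith only [h1, h3, hT₀]
      have hkey := key t hM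
      have h5 := htri t
      have h6 : (0:ℝ) ≤ ‖ω (t + 1) - ωstar t‖ + δ₁ :=
        add_nonneg (norm_nonneg _) hδ₁0
      have h7 : ‖ω (t + 1) - ωstar (t + 1)‖ * ‖ω (t + 1) - ωstar (t + 1)‖ ≤
          (‖ω (t + 1) - ωstar t‖ + δ₁) * (‖ω (t + 1) - ωstar t‖ + δ₁) :=
        mul_le_mul h5 h5 (norm_nonneg _) h6
      nlinarith only [h7, hkey, sq_nonneg (‖ω (t + 1) - ωstar t‖ - δ₁)]
    have hlim : Filter.limsup (fun t => ‖ω t - ωstar t‖ ^ 2) Filter.atTop ≤ γ + 2 * δ₁ ^ 2 := by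
      apply Filter.limsup_le_of_le
      · exact Filter.isCoboundedUnder_le_of_le Filter.atTop (fun t => sq_nonneg _)
      · exact Filter.eventually_atTop.2 ⟨T₀ + 1, hev⟩
    rw [hαeq]
    have h6 : γ + 2 * δ₁ ^ 2 ≤ (γ + δ₁ ^ 2) / (1 / 2 - ρ ^ K) := by
      rw [le_div_iff₀ (by linarith only [hρK])]
      have h8 : 0 ≤ (γ + 2 * δ₁ ^ 2) * ρ ^ K :=
        mul_nonneg (by positivity) (pow_nonneg hρ0 K)
      nlinarith only [h8, hγ]
    linarith only [hlim, h6]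
end
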